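/- arXiv:2507.07707 — 4 statements merged into one kernel-verified Lean document; each statement's English description precedes it below -/
import Mathlib

section
/- Let D, L ≥ 1, let N_l ≥ 2 for l = 1,…,L, and let G_l ∈ ℝ^{N_l×⋯×N_l×F} (D grid dimensions plus one feature dimension) be the grid tensors of a multi-resolution grid encoding H : [0,1)^D → ℝ^{LF}. Let σ : ℝ → ℝ be γ-Lipschitz, let W₁ ∈ ℝ^{n₁×LF}, W₂ ∈ ℝ^{1×n₁}, b ∈ ℝ^{n₁}, and define the InstantNGP model (g_Θ∘H)(v) = W₂ σ(W₁ H(v) + b), with σ applied entrywise. Assume that ‖G_l[z,:]‖_{ℓ1} ≤ 1 for every resolution l and every grid vertex index z. Then for all v₁, v₂ ∈ [0,1)^D, |(g_Θ∘H)(v₁) − (g_Θ∘H)(v₂)| ≤ 2^D γ η D N ‖v₁ − v₂‖_{ℓ1}, where η = ‖W₁‖_{ℓ1} ‖W₂‖_{ℓ1} (entrywise ℓ1 norms of the weight matrices) and N = Σ_{l=1}^{L} (N_l − 1). -/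
open Finset

/-- `D`-dimensional multilinear interpolation over a grid tensor `G` (grid vertices
indexed by `Fin D → ℕ`, feature dimension `Fin F`) at resolution `Nl`:
`h_l(v) = Σ_{b∈{0,1}^D} (∏_d (1−u[d])^{1−b_d} u[d]^{b_d}) · G[⌊(N_l−1)v⌋ + b, :]`
where `u = (N_l−1)v − ⌊(N_l−1)v⌋`. -/
noncomputable def interp (D F Nl : ℕ) (G : (Fin D → ℕ) → Fin F → ℝ)
    (v : Fin D → ℝ) : Fin F → ℝ := fun j =>
  ∑ b : Fin D → Bool,
    (∏ d, (if b d then Int.fract (((Nl : ℝ) - 1) * v d)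
           else 1 - Int.fract (((Nl : ℝ) - 1) * v d))) *
      G (fun d => (⌊((Nl : ℝ) - 1) * v d⌋).toNat + (if b d then 1 else 0)) j

/-- Multi-resolution grid encoding (InstantNGP) `H : [0,1)^D → ℝ^{L×F}`,
the concatenation of the `L` multilinearly interpolated features. -/
noncomputable def ngpEnc (D L F : ℕ) (N : Fin L → ℕ)
    (G : (l : Fin L) → (Fin D → ℕ) → Fin F → ℝ) (v : Fin D → ℝ) :
    Fin L × Fin F → ℝ :=
  fun p => interp D F (N p.1) (G p.1) v p.2

/-- One-hidden-layer MLP `x ↦ W₂ σ(W₁ x + b)` with scalar output. -/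
noncomputable def mlp {ι : Type} [Fintype ι] (n1 : ℕ) (σ : ℝ → ℝ)
    (W1 : Fin n1 → ι → ℝ) (W2 : Fin n1 → ℝ) (bv : Fin n1 → ℝ) (x : ι → ℝ) : ℝ :=
  ∑ i, W2 i * σ ((∑ j, W1 i j * x j) + bv i)

noncomputable def hat (x : ℝ) : ℝ := max 0 (1 - |x|)



lemma hat_nonneg (x : ℝ) : 0 ≤ hat x := le_max_left _ _
lemma hat_le_one (x : ℝ) : hat x ≤ 1 := by
  unfold hat
  have := abs_nonneg x
  exact max_le (by norm_num) (by linarith)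

lemma hat_eq_zero {x : ℝ} (h : 1 ≤ |x|) : hat x = 0 := by
  unfold hat; exact max_eq_left (by linarith)

lemma hat_eq {x : ℝ} (h : |x| ≤ 1) : hat x = 1 - |x| := max_eq_right (by linarith)

lemma hat_of_nonneg {x : ℝ} (h0 : 0 ≤ x) (h1 : x ≤ 1) : hat x = 1 - x := by
  rw [hat_eq (by rw [abs_of_nonneg h0]; exact h1), abs_of_nonneg h0]

lemma hat_of_nonpos {x : ℝ} (h0 : -1 ≤ x) (h1 : x ≤ 0) : hat x = 1 + x := by
  rw [hat_eq (by rw [abs_of_nonpos h1]; linarith), abs_of_nonpos h1]; ring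

lemma hat_lip (a b : ℝ) : |hat a - hat b| ≤ |a - b| := by
  unfold hat
  rw [max_comm 0 (1 - |a|), max_comm 0 (1 - |b|)]
  calc |max (1 - |a|) 0 - max (1 - |b|) 0| ≤ |(1 - |a|) - (1 - |b|)| :=
        abs_max_sub_max_le_abs _ _ _
    _ = |(|b|) - (|a|)| := by ring_nf
    _ ≤ |b - a| := abs_abs_sub_abs_le_abs_sub _ _
    _ = |a - b| := abs_sub_comm _ _

lemma sum_ite_le {n : ℕ} (P : Fin n → Prop) [DecidablePred P]
    (hP : ∀ z1 z2, P z1 → P z2 → z1 = z2) (c : ℝ) (hc : 0 ≤ c) :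
    ∑ z : Fin n, (if P z then c else 0) ≤ c := by
  by_cases hex : ∃ z, P z
  · obtain ⟨z0, hz0⟩ := hex
    rw [Finset.sum_eq_single z0]
    · simp [hz0]
    · intro z _ hz
      exact if_neg (fun hp => hz (hP z z0 hp hz0))
    · intro h; exact absurd (Finset.mem_univ z0) h
  · push_neg at hex
    rw [Finset.sum_eq_zero (fun z _ => if_neg (hex z))]
    exact hc

lemma fin_cast_inj {n : ℕ} {z1 z2 : Fin n} {m : ℤ} (h1 : ((z1 : ℕ) : ℤ) = m)
    (h2 : ((z2 : ℕ) : ℤ) = m) : z1 = z2 := by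
  apply Fin.ext; omega

lemma hat_sum_le_one (n : ℕ) (t : ℝ) : ∑ z : Fin n, hat (t - (z : ℕ)) ≤ 1 := by
  have hfl : (⌊t⌋ : ℝ) ≤ t := Int.floor_le t
  have hfl2 : t < (⌊t⌋ : ℝ) + 1 := Int.lt_floor_add_one t
  have hu0 : 0 ≤ Int.fract t := Int.fract_nonneg t
  have hu1 : Int.fract t < 1 := Int.fract_lt_one t
  have hte : t = (⌊t⌋ : ℝ) + Int.fract t := by
    have := Int.floor_add_fract t; linarith
  calc ∑ z : Fin n, hat (t - (z : ℕ))
      ≤ ∑ z : Fin n, ((if ((z : ℕ) : ℤ) = ⌊t⌋ then (1 - Int.fract t) else 0)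
        + (if ((z : ℕ) : ℤ) = ⌊t⌋ + 1 then Int.fract t else 0)) := by
        apply Finset.sum_le_sum
        intro z _
        by_cases h1 : ((z : ℕ) : ℤ) = ⌊t⌋
        · have hz : ((z : ℕ) : ℝ) = (⌊t⌋ : ℝ) := by exact_mod_cast congrArg (fun i : ℤ => (i : ℝ)) h1
          have h2 : ¬ (((z : ℕ) : ℤ) = ⌊t⌋ + 1) := by omega
          rw [if_pos h1, if_neg h2, hz]
          rw [hat_of_nonneg (by linarith) (by linarith)]
          linarith
        · by_cases h2 : ((z : ℕ) : ℤ) = ⌊t⌋ + 1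
          · have hz : ((z : ℕ) : ℝ) = (⌊t⌋ : ℝ) + 1 := by exact_mod_cast congrArg (fun i : ℤ => (i : ℝ)) h2
            rw [if_pos h2, if_neg h1, hz]
            rw [hat_of_nonpos (by linarith) (by linarith)]
            linarith
          · rw [if_neg h1, if_neg h2]
            have : hat (t - (z : ℕ)) = 0 := by
              apply hat_eq_zero
              rcases lt_or_ge (((z : ℕ) : ℤ)) ⌊t⌋ with h | h
              · have : ((z : ℕ) : ℝ) ≤ (⌊t⌋ : ℝ) - 1 := by
                  have : ((z : ℕ) : ℤ) ≤ ⌊t⌋ - 1 := by omega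
                  exact_mod_cast this
                rw [abs_of_nonneg (by linarith)]; linarith
              · have : (⌊t⌋ : ℝ) + 2 ≤ ((z : ℕ) : ℝ) := by
                  have : ⌊t⌋ + 2 ≤ ((z : ℕ) : ℤ) := by omega
                  exact_mod_cast this
                rw [abs_of_nonpos (by linarith)]; linarith
            simp [this]
    _ ≤ (1 - Int.fract t) + Int.fract t := by
        rw [Finset.sum_add_distrib]
        have h1 := sum_ite_le (fun z : Fin n => ((z : ℕ) : ℤ) = ⌊t⌋)
          (fun z1 z2 a b => fin_cast_inj a b) (1 - Int.fract t) (by linarith)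
        have h2 := sum_ite_le (fun z : Fin n => ((z : ℕ) : ℤ) = ⌊t⌋ + 1)
          (fun z1 z2 a b => fin_cast_inj a b) (Int.fract t) hu0
        exact add_le_add h1 h2
    _ = 1 := by ring

lemma hat_tv1_aux (n : ℕ) (t1 t2 : ℝ) (hle : t1 ≤ t2) :
    ∑ z : Fin n, |hat (t1 - (z : ℕ)) - hat (t2 - (z : ℕ))| ≤ 2 * (t2 - t1) := by
  by_cases hδ : 1 ≤ t2 - t1
  · calc ∑ z : Fin n, |hat (t1 - (z : ℕ)) - hat (t2 - (z : ℕ))|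
        ≤ ∑ z : Fin n, (hat (t1 - (z : ℕ)) + hat (t2 - (z : ℕ))) := by
          apply Finset.sum_le_sum; intro z _
          have h1 := hat_nonneg (t1 - (z : ℕ))
          have h2 := hat_nonneg (t2 - (z : ℕ))
          rw [abs_sub_le_iff]; constructor <;> linarith
      _ = (∑ z : Fin n, hat (t1 - (z : ℕ))) + ∑ z : Fin n, hat (t2 - (z : ℕ)) :=
          Finset.sum_add_distrib
      _ ≤ 1 + 1 := add_le_add (hat_sum_le_one n t1) (hat_sum_le_one n t2)
      _ ≤ 2 * (t2 - t1) := by linarith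
  · push_neg at hδ
    set m : ℤ := ⌊t1⌋ with hm
    have hfl : (m : ℝ) ≤ t1 := Int.floor_le t1
    have hfl2 : t1 < (m : ℝ) + 1 := Int.lt_floor_add_one t1
    set u1 : ℝ := t1 - m with hu1def
    have hu10 : 0 ≤ u1 := by simp [hu1def]; linarith
    have hu11 : u1 < 1 := by simp [hu1def]; linarith
    -- zero outside {m, m+1, m+2} for both
    have hzero : ∀ z : Fin n, (((z:ℕ):ℤ) < m ∨ m + 3 ≤ ((z:ℕ):ℤ)) →
        hat (t1 - (z : ℕ)) = 0 ∧ hat (t2 - (z : ℕ)) = 0 := by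
      intro z hz
      rcases hz with h | h
      · have hle' : ((z : ℕ) : ℝ) ≤ (m : ℝ) - 1 := by exact_mod_cast (by omega : ((z:ℕ):ℤ) ≤ m - 1)
        constructor <;>
          · apply hat_eq_zero
            rw [abs_of_nonneg (by linarith)]; linarith
      · have hle' : (m : ℝ) + 3 ≤ ((z : ℕ) : ℝ) := by exact_mod_cast (by omega : m + 3 ≤ ((z:ℕ):ℤ))
        constructor <;>
          · apply hat_eq_zero
            rw [abs_of_nonpos (by linarith)]; linarith
    by_cases hB : t2 < (m : ℝ) + 1
    · -- subcase A
      calc ∑ z : Fin n, |hat (t1 - (z : ℕ)) - hat (t2 - (z : ℕ))|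
          ≤ ∑ z : Fin n, ((if ((z:ℕ):ℤ) = m then t2 - t1 else 0)
            + (if ((z:ℕ):ℤ) = m + 1 then t2 - t1 else 0)) := by
            apply Finset.sum_le_sum; intro z _
            by_cases h1 : ((z:ℕ):ℤ) = m
            · have hb : |hat (t1 - (z:ℕ)) - hat (t2 - (z:ℕ))| ≤ t2 - t1 := by
                refine (hat_lip _ _).trans ?_
                rw [abs_of_nonpos (by linarith)]; linarith
              rw [if_pos h1, if_neg (by omega)]
              linarith
            · by_cases h2 : ((z:ℕ):ℤ) = m + 1
              · have hb : |hat (t1 - (z:ℕ)) - hat (t2 - (z:ℕ))| ≤ t2 - t1 := by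
                  refine (hat_lip _ _).trans ?_
                  rw [abs_of_nonpos (by linarith)]; linarith
                rw [if_neg h1, if_pos h2]
                linarith
              · rw [if_neg h1, if_neg h2]
                by_cases h3 : ((z:ℕ):ℤ) = m + 2
                · have hz2 : ((z : ℕ) : ℝ) = (m : ℝ) + 2 := by exact_mod_cast congrArg (fun i : ℤ => (i : ℝ)) h3
                  have e1 : hat (t1 - (z:ℕ)) = 0 := by
                    apply hat_eq_zero; rw [abs_of_nonpos (by rw [hz2]; linarith)]
                    rw [hz2]; linarith
                  have e2 : hat (t2 - (z:ℕ)) = 0 := by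
                    apply hat_eq_zero; rw [abs_of_nonpos (by rw [hz2]; linarith)]
                    rw [hz2]; linarith
                  simp [e1, e2]
                · obtain ⟨e1, e2⟩ := hzero z (by omega)
                  simp [e1, e2]
        _ ≤ (t2 - t1) + (t2 - t1) := by
            rw [Finset.sum_add_distrib]
            exact add_le_add
              (sum_ite_le _ (fun z1 z2 a b => fin_cast_inj a b) _ (by linarith))
              (sum_ite_le _ (fun z1 z2 a b => fin_cast_inj a b) _ (by linarith))
        _ = 2 * (t2 - t1) := by ring
    · -- subcase B : m + 1 ≤ t2
      push_neg at hB
      set u2 : ℝ := t2 - (m + 1) with hu2def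
      have hu20 : 0 ≤ u2 := by simp [hu2def]; linarith
      have hu21 : u2 < 1 := by
        have : t2 < t1 + 1 := by linarith
        simp [hu2def]; linarith
      have hdelta : t2 - t1 = 1 + u2 - u1 := by simp [hu1def, hu2def]; ring
      calc ∑ z : Fin n, |hat (t1 - (z : ℕ)) - hat (t2 - (z : ℕ))|
          ≤ ∑ z : Fin n, ((if ((z:ℕ):ℤ) = m then 1 - u1 else 0)
            + ((if ((z:ℕ):ℤ) = m + 1 then |u1 + u2 - 1| else 0)
            + (if ((z:ℕ):ℤ) = m + 2 then u2 else 0))) := by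
            apply Finset.sum_le_sum; intro z _
            by_cases h1 : ((z:ℕ):ℤ) = m
            · have hz : ((z : ℕ) : ℝ) = (m : ℝ) := by exact_mod_cast congrArg (fun i : ℤ => (i : ℝ)) h1
              rw [if_pos h1, if_neg (by omega), if_neg (by omega), hz]
              have e1 : hat (t1 - (m:ℝ)) = 1 - u1 := by
                rw [hat_of_nonneg (by linarith) (by linarith), hu1def]
              have e2 : hat (t2 - (m:ℝ)) = 0 := by
                apply hat_eq_zero; rw [abs_of_nonneg (by linarith)]; linarith
              rw [e1, e2]
              rw [abs_of_nonneg (by linarith)]; linarith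
            · by_cases h2 : ((z:ℕ):ℤ) = m + 1
              · have hz : ((z : ℕ) : ℝ) = (m : ℝ) + 1 := by exact_mod_cast congrArg (fun i : ℤ => (i : ℝ)) h2
                rw [if_neg h1, if_pos h2, if_neg (by omega), hz]
                have e1 : hat (t1 - ((m:ℝ) + 1)) = u1 := by
                  rw [hat_of_nonpos (by linarith) (by linarith), hu1def]; ring
                have e2 : hat (t2 - ((m:ℝ) + 1)) = 1 - u2 := by
                  rw [hat_of_nonneg (by linarith) (by linarith), hu2def]
                rw [e1, e2]
                have : u1 - (1 - u2) = u1 + u2 - 1 := by ring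
                rw [this]
                simp
              · by_cases h3 : ((z:ℕ):ℤ) = m + 2
                · have hz : ((z : ℕ) : ℝ) = (m : ℝ) + 2 := by exact_mod_cast congrArg (fun i : ℤ => (i : ℝ)) h3
                  rw [if_neg h1, if_neg h2, if_pos h3, hz]
                  have e1 : hat (t1 - ((m:ℝ) + 2)) = 0 := by
                    apply hat_eq_zero; rw [abs_of_nonpos (by linarith)]; linarith
                  have e2 : hat (t2 - ((m:ℝ) + 2)) = u2 := by
                    rw [hat_of_nonpos (by linarith) (by linarith), hu2def]; ring
                  rw [e1, e2]
                  rw [abs_of_nonpos (by linarith)]; linarith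
                · obtain ⟨e1, e2⟩ := hzero z (by omega)
                  rw [if_neg h1, if_neg h2, if_neg h3, e1, e2]
                  simp
        _ ≤ (1 - u1) + (|u1 + u2 - 1| + u2) := by
            rw [Finset.sum_add_distrib]
            apply add_le_add
            · exact sum_ite_le _ (fun z1 z2 a b => fin_cast_inj a b) _ (by linarith)
            · rw [Finset.sum_add_distrib]
              exact add_le_add
                (sum_ite_le _ (fun z1 z2 a b => fin_cast_inj a b) _ (abs_nonneg _))
                (sum_ite_le _ (fun z1 z2 a b => fin_cast_inj a b) _ hu20)
        _ ≤ 2 * (t2 - t1) := by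
            rw [hdelta]
            rcases le_or_gt 1 (u1 + u2) with h | h
            · rw [abs_of_nonneg (by linarith)]; linarith
            · rw [abs_of_nonpos (by linarith)]; linarith

lemma hat_tv1 (n : ℕ) (t1 t2 : ℝ) :
    ∑ z : Fin n, |hat (t1 - (z : ℕ)) - hat (t2 - (z : ℕ))| ≤ 2 * |t1 - t2| := by
  rcases le_total t1 t2 with h | h
  · rw [abs_of_nonpos (by linarith)]
    calc _ ≤ 2 * (t2 - t1) := hat_tv1_aux n t1 t2 h
      _ = 2 * -(t1 - t2) := by ring
  · rw [abs_of_nonneg (by linarith)]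
    calc ∑ z : Fin n, |hat (t1 - (z : ℕ)) - hat (t2 - (z : ℕ))|
        = ∑ z : Fin n, |hat (t2 - (z : ℕ)) - hat (t1 - (z : ℕ))| := by
          apply Finset.sum_congr rfl; intro z _; rw [abs_sub_comm]
      _ ≤ 2 * (t1 - t2) := hat_tv1_aux n t2 t1 h

lemma sum_pi_cons {n D : ℕ} (f : (Fin (D+1) → Fin n) → ℝ) :
    ∑ z : Fin (D+1) → Fin n, f z
      = ∑ x : Fin n, ∑ g : Fin D → Fin n, f (Fin.cons x g) := by
  have h1 : ∑ z : Fin (D+1) → Fin n, f z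
      = ∑ p : Fin n × (Fin D → Fin n), f (Fin.cons p.1 p.2) :=
    (Fintype.sum_equiv (Fin.consEquiv (fun _ => Fin n)) _ _
      (fun p => by simp [Fin.consEquiv])).symm
  rw [h1, Fintype.sum_prod_type]

lemma hatprod_sum_le_one (n : ℕ) : ∀ (D : ℕ) (t : Fin D → ℝ),
    (∑ z : Fin D → Fin n, ∏ d, hat (t d - ((z d : ℕ) : ℝ))) ≤ 1 := by
  intro D
  induction D with
  | zero => intro t; simp
  | succ D ih =>
    intro t
    rw [sum_pi_cons]
    have : ∀ x : Fin n, ∑ g : Fin D → Fin n,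
        (∏ d, hat (t d - (((Fin.cons x g : Fin (D+1) → Fin n) d : ℕ) : ℝ)))
        = hat (t 0 - (x : ℕ)) * ∑ g : Fin D → Fin n,
            ∏ d : Fin D, hat (t d.succ - ((g d : ℕ) : ℝ)) := by
      intro x
      rw [Finset.mul_sum]
      apply Finset.sum_congr rfl
      intro g _
      rw [Fin.prod_univ_succ]
      simp
    rw [Finset.sum_congr rfl (fun x _ => this x), ← Finset.sum_mul]
    have h1 : (0:ℝ) ≤ ∑ g : Fin D → Fin n, ∏ d : Fin D, hat (t d.succ - ((g d : ℕ) : ℝ)) :=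
      Finset.sum_nonneg fun g _ => Finset.prod_nonneg fun d _ => hat_nonneg _
    exact mul_le_one₀ (hat_sum_le_one n (t 0)) h1 (ih _)

lemma hatprod_tv (n : ℕ) : ∀ (D : ℕ) (t1 t2 : Fin D → ℝ),
    (∑ z : Fin D → Fin n,
      |(∏ d, hat (t1 d - ((z d : ℕ) : ℝ))) - ∏ d, hat (t2 d - ((z d : ℕ) : ℝ))|)
      ≤ 2 * ∑ d, |t1 d - t2 d| := by
  intro D
  induction D with
  | zero => intro t1 t2; simp
  | succ D ih =>
    intro t1 t2
    rw [sum_pi_cons]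
    have key : ∀ (x : Fin n) (g : Fin D → Fin n),
        |(∏ d, hat (t1 d - (((Fin.cons x g : Fin (D+1) → Fin n) d : ℕ) : ℝ)))
          - ∏ d, hat (t2 d - (((Fin.cons x g : Fin (D+1) → Fin n) d : ℕ) : ℝ))|
        ≤ |hat (t1 0 - (x:ℕ)) - hat (t2 0 - (x:ℕ))|
            * ∏ d : Fin D, hat (t1 d.succ - ((g d : ℕ) : ℝ))
          + hat (t2 0 - (x:ℕ)) *
            |(∏ d : Fin D, hat (t1 d.succ - ((g d : ℕ) : ℝ)))
              - ∏ d : Fin D, hat (t2 d.succ - ((g d : ℕ) : ℝ))| := by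
      intro x g
      rw [Fin.prod_univ_succ, Fin.prod_univ_succ]
      simp only [Fin.cons_zero, Fin.cons_succ]
      set a0 := hat (t1 0 - (x:ℕ)); set b0 := hat (t2 0 - (x:ℕ))
      set PA := ∏ d : Fin D, hat (t1 d.succ - ((g d : ℕ) : ℝ))
      set PB := ∏ d : Fin D, hat (t2 d.succ - ((g d : ℕ) : ℝ))
      have : a0 * PA - b0 * PB = (a0 - b0) * PA + b0 * (PA - PB) := by ring
      rw [this]
      refine (abs_add_le _ _).trans ?_
      rw [abs_mul, abs_mul]
      have hPA : 0 ≤ PA := Finset.prod_nonneg fun d _ => hat_nonneg _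
      have hb0 : 0 ≤ b0 := hat_nonneg _
      rw [abs_of_nonneg hPA, abs_of_nonneg hb0]
    calc ∑ x : Fin n, ∑ g : Fin D → Fin n,
          |(∏ d, hat (t1 d - (((Fin.cons x g : Fin (D+1) → Fin n) d : ℕ) : ℝ)))
            - ∏ d, hat (t2 d - (((Fin.cons x g : Fin (D+1) → Fin n) d : ℕ) : ℝ))|
        ≤ ∑ x : Fin n, ∑ g : Fin D → Fin n,
            (|hat (t1 0 - (x:ℕ)) - hat (t2 0 - (x:ℕ))|
              * ∏ d : Fin D, hat (t1 d.succ - ((g d : ℕ) : ℝ))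
            + hat (t2 0 - (x:ℕ)) *
              |(∏ d : Fin D, hat (t1 d.succ - ((g d : ℕ) : ℝ)))
                - ∏ d : Fin D, hat (t2 d.succ - ((g d : ℕ) : ℝ))|) := by
          exact Finset.sum_le_sum fun x _ => Finset.sum_le_sum fun g _ => key x g
      _ = (∑ x : Fin n, |hat (t1 0 - (x:ℕ)) - hat (t2 0 - (x:ℕ))|)
            * (∑ g : Fin D → Fin n, ∏ d : Fin D, hat (t1 d.succ - ((g d : ℕ) : ℝ)))
          + (∑ x : Fin n, hat (t2 0 - (x:ℕ)))
            * (∑ g : Fin D → Fin n,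
                |(∏ d : Fin D, hat (t1 d.succ - ((g d : ℕ) : ℝ)))
                  - ∏ d : Fin D, hat (t2 d.succ - ((g d : ℕ) : ℝ))|) := by
          simp only [Finset.sum_add_distrib, ← Finset.mul_sum, ← Finset.sum_mul]
      _ ≤ (2 * |t1 0 - t2 0|) * 1 + 1 * (2 * ∑ d : Fin D, |t1 d.succ - t2 d.succ|) := by
          apply add_le_add
          · apply mul_le_mul (hat_tv1 n _ _) (hatprod_sum_le_one n D _)
              (Finset.sum_nonneg fun g _ => Finset.prod_nonneg fun d _ => hat_nonneg _)
              (by positivity)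
          · apply mul_le_mul (hat_sum_le_one n _) (ih _ _)
              (Finset.sum_nonneg fun g _ => abs_nonneg _)
              (by norm_num)
      _ = 2 * ∑ d : Fin (D+1), |t1 d - t2 d| := by
          rw [Fin.sum_univ_succ]; ring

lemma interp_eq_hatSum (D F Nl : ℕ) (hNl : 2 ≤ Nl) (G : (Fin D → ℕ) → Fin F → ℝ)
    (v : Fin D → ℝ) (hv : ∀ d, v d ∈ Set.Ico (0:ℝ) 1) (j : Fin F) :
    interp D F Nl G v j =
      ∑ z : Fin D → Fin Nl,
        (∏ d, hat (((Nl:ℝ) - 1) * v d - ((z d : ℕ) : ℝ))) * G (fun d => (z d : ℕ)) j := by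
  classical
  set t : Fin D → ℝ := fun d => ((Nl:ℝ) - 1) * v d with ht
  have hNR : (1:ℝ) ≤ (Nl:ℝ) - 1 := by
    have : (2:ℝ) ≤ (Nl:ℝ) := by exact_mod_cast hNl
    linarith
  have ht0 : ∀ d, 0 ≤ t d := fun d => mul_nonneg (by linarith) (hv d).1
  have ht1 : ∀ d, t d < (Nl:ℝ) - 1 := by
    intro d
    have := (hv d).2
    calc t d = ((Nl:ℝ) - 1) * v d := rfl
      _ < ((Nl:ℝ) - 1) * 1 := by
          apply mul_lt_mul_of_pos_left this (by linarith)
      _ = (Nl:ℝ) - 1 := by ring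
  have hfl0 : ∀ d, 0 ≤ ⌊t d⌋ := fun d => Int.floor_nonneg.mpr (ht0 d)
  have hflN : ∀ d, ⌊t d⌋ < (Nl:ℤ) - 1 := by
    intro d
    rw [Int.floor_lt]
    calc t d < (Nl:ℝ) - 1 := ht1 d
      _ = (((Nl:ℤ) - 1 : ℤ) : ℝ) := by push_cast; ring
  have hcast : ∀ d, ((⌊t d⌋.toNat : ℕ) : ℝ) = (⌊t d⌋ : ℝ) := by
    intro d
    exact_mod_cast congrArg (fun i : ℤ => (i : ℝ)) (Int.toNat_of_nonneg (hfl0 d))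
  -- the embedding
  have hbound : ∀ (b : Fin D → Bool) (d : Fin D),
      ⌊t d⌋.toNat + (if b d then 1 else 0) < Nl := by
    intro b d
    have h1 := hflN d
    have h2 := hfl0 d
    split <;> omega
  set e : (Fin D → Bool) → (Fin D → Fin Nl) :=
    fun b d => ⟨⌊t d⌋.toNat + (if b d then 1 else 0), hbound b d⟩ with he
  have hinj : Function.Injective e := by
    intro b1 b2 h
    funext d
    have := congrFun h d
    have hval : ⌊t d⌋.toNat + (if b1 d then 1 else 0)
        = ⌊t d⌋.toNat + (if b2 d then 1 else 0) := congrArg Fin.val this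
    rcases hb1 : b1 d <;> rcases hb2 : b2 d <;> simp [hb1, hb2] at hval ⊢
  set f : (Fin D → Fin Nl) → ℝ :=
    fun z => (∏ d, hat (t d - ((z d : ℕ) : ℝ))) * G (fun d => (z d : ℕ)) j with hf
  have hzero : ∀ z ∈ (univ : Finset (Fin D → Fin Nl)), z ∉ Finset.image e univ → f z = 0 := by
    intro z _ hz
    have hne : ∀ b : Fin D → Bool, e b ≠ z := by
      intro b hb
      exact hz (Finset.mem_image.mpr ⟨b, Finset.mem_univ b, hb⟩)
    have hd : ∃ d, (z d : ℕ) ≠ ⌊t d⌋.toNat ∧ (z d : ℕ) ≠ ⌊t d⌋.toNat + 1 := by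
      by_contra hcon
      push_neg at hcon
      apply hne (fun d => decide ((z d : ℕ) = ⌊t d⌋.toNat + 1))
      funext d
      apply Fin.ext
      show ⌊t d⌋.toNat + (if decide ((z d : ℕ) = ⌊t d⌋.toNat + 1) then 1 else 0) = (z d : ℕ)
      have hzd : (z d : ℕ) = ⌊t d⌋.toNat ∨ (z d : ℕ) = ⌊t d⌋.toNat + 1 := by
        rcases eq_or_ne ((z d : ℕ)) (⌊t d⌋.toNat) with h | h
        · exact Or.inl h
        · exact Or.inr (hcon d h)
      simp only [decide_eq_true_eq]
      split_ifs with hcase <;> omega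
    obtain ⟨d, hd1, hd2⟩ := hd
    have hhat : hat (t d - ((z d : ℕ) : ℝ)) = 0 := by
      apply hat_eq_zero
      have hfltd : (⌊t d⌋ : ℝ) ≤ t d := Int.floor_le _
      have hfltd2 : t d < (⌊t d⌋ : ℝ) + 1 := Int.lt_floor_add_one _
      rcases lt_or_ge ((z d : ℕ)) (⌊t d⌋.toNat) with h | h
      · have : ((z d : ℕ) : ℝ) ≤ (⌊t d⌋ : ℝ) - 1 := by
          have h2 := hfl0 d
          have : ((z d : ℕ) : ℤ) ≤ ⌊t d⌋ - 1 := by omega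
          exact_mod_cast this
        rw [abs_of_nonneg (by linarith)]; linarith
      · have : (⌊t d⌋ : ℝ) + 2 ≤ ((z d : ℕ) : ℝ) := by
          have h2 := hfl0 d
          have : ⌊t d⌋ + 2 ≤ ((z d : ℕ) : ℤ) := by omega
          exact_mod_cast this
        rw [abs_of_nonpos (by linarith)]; linarith
    rw [hf]
    simp only
    rw [Finset.prod_eq_zero (Finset.mem_univ d) hhat, zero_mul]
  have h1 : ∑ z : Fin D → Fin Nl, f z = ∑ z ∈ Finset.image e univ, f z :=
    (Finset.sum_subset (Finset.subset_univ _) hzero).symm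
  have h2 : ∑ z ∈ Finset.image e univ, f z = ∑ b : Fin D → Bool, f (e b) :=
    Finset.sum_image (fun b1 _ b2 _ h => hinj h)
  have h3 : ∀ b : Fin D → Bool, f (e b)
      = (∏ d, (if b d then Int.fract (t d) else 1 - Int.fract (t d)))
        * G (fun d => ⌊t d⌋.toNat + (if b d then 1 else 0)) j := by
    intro b
    rw [hf]
    simp only
    congr 1
    apply Finset.prod_congr rfl
    intro d _
    have hval : ((e b d : ℕ) : ℝ) = (⌊t d⌋ : ℝ) + (if b d then 1 else 0) := by
      show ((⌊t d⌋.toNat + (if b d then 1 else 0) : ℕ) : ℝ) = _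
      push_cast [hcast d]
      split <;> simp [hcast d]
    rw [hval]
    clear hval
    have hu0 : 0 ≤ Int.fract (t d) := Int.fract_nonneg _
    have hu1 : Int.fract (t d) < 1 := Int.fract_lt_one _
    have hfr : t d - (⌊t d⌋ : ℝ) = Int.fract (t d) := by
      have := Int.floor_add_fract (t d); linarith
    by_cases hb : b d = true
    · rw [if_pos hb, if_pos hb]
      rw [show t d - ((⌊t d⌋:ℝ) + 1) = Int.fract (t d) - 1 by rw [← hfr]; ring]
      rw [hat_of_nonpos (by linarith) (by linarith)]; ring
    · rw [if_neg hb, if_neg hb, add_zero]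
      rw [show t d - (⌊t d⌋:ℝ) = Int.fract (t d) from hfr]
      rw [hat_of_nonneg hu0 (by linarith)]
  rw [interp]
  rw [h1, h2]
  apply Finset.sum_congr rfl
  intro b _
  rw [h3 b]

lemma interp_diff_le (D F Nl : ℕ) (hNl : 2 ≤ Nl) (G : (Fin D → ℕ) → Fin F → ℝ)
    (hGb : ∀ z j, |G z j| ≤ 1)
    (v1 v2 : Fin D → ℝ) (hv1 : ∀ d, v1 d ∈ Set.Ico (0:ℝ) 1)
    (hv2 : ∀ d, v2 d ∈ Set.Ico (0:ℝ) 1) (j : Fin F) :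
    |interp D F Nl G v1 j - interp D F Nl G v2 j|
      ≤ 2 * ((Nl:ℝ) - 1) * ∑ d, |v1 d - v2 d| := by
  rw [interp_eq_hatSum D F Nl hNl G v1 hv1 j, interp_eq_hatSum D F Nl hNl G v2 hv2 j]
  rw [← Finset.sum_sub_distrib]
  set t1 : Fin D → ℝ := fun d => ((Nl:ℝ) - 1) * v1 d
  set t2 : Fin D → ℝ := fun d => ((Nl:ℝ) - 1) * v2 d
  have hNR : (0:ℝ) ≤ (Nl:ℝ) - 1 := by
    have : (2:ℝ) ≤ (Nl:ℝ) := by exact_mod_cast hNl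
    linarith
  calc |∑ z : Fin D → Fin Nl,
        ((∏ d, hat (t1 d - ((z d : ℕ) : ℝ))) * G (fun d => (z d : ℕ)) j
          - (∏ d, hat (t2 d - ((z d : ℕ) : ℝ))) * G (fun d => (z d : ℕ)) j)|
      ≤ ∑ z : Fin D → Fin Nl,
        |(∏ d, hat (t1 d - ((z d : ℕ) : ℝ))) * G (fun d => (z d : ℕ)) j
          - (∏ d, hat (t2 d - ((z d : ℕ) : ℝ))) * G (fun d => (z d : ℕ)) j| :=
      Finset.abs_sum_le_sum_abs _ _
    _ ≤ ∑ z : Fin D → Fin Nl,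
        |(∏ d, hat (t1 d - ((z d : ℕ) : ℝ))) - ∏ d, hat (t2 d - ((z d : ℕ) : ℝ))| := by
      apply Finset.sum_le_sum
      intro z _
      rw [← sub_mul, abs_mul]
      calc |(∏ d, hat (t1 d - ((z d : ℕ) : ℝ))) - ∏ d, hat (t2 d - ((z d : ℕ) : ℝ))|
            * |G (fun d => (z d : ℕ)) j|
          ≤ |(∏ d, hat (t1 d - ((z d : ℕ) : ℝ))) - ∏ d, hat (t2 d - ((z d : ℕ) : ℝ))| * 1 :=
          mul_le_mul_of_nonneg_left (hGb _ j) (abs_nonneg _)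
        _ = _ := mul_one _
    _ ≤ 2 * ∑ d, |t1 d - t2 d| := hatprod_tv Nl D t1 t2
    _ = 2 * ((Nl:ℝ) - 1) * ∑ d, |v1 d - v2 d| := by
      have habs : ∀ d, |t1 d - t2 d| = ((Nl:ℝ) - 1) * |v1 d - v2 d| := by
        intro d
        rw [show t1 d - t2 d = ((Nl:ℝ) - 1) * (v1 d - v2 d) from by
          show ((Nl:ℝ) - 1) * v1 d - ((Nl:ℝ) - 1) * v2 d = _; ring]
        rw [abs_mul, abs_of_nonneg hNR]
      rw [Finset.sum_congr rfl (fun d _ => habs d), ← Finset.mul_sum]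
      ring


/-- **Lipschitz smooth bound for InstantNGP.** If `σ` is `γ`-Lipschitz and the feature
vector at every grid vertex has ℓ1 norm at most 1, then
`|(g_Θ∘H)(v₁) − (g_Θ∘H)(v₂)| ≤ 2^D γ η D N ‖v₁−v₂‖₁` with
`η = ‖W₁‖₁‖W₂‖₁` and `N = Σ_l (N_l − 1)`. -/
theorem instantNGP_lipschitz_bound
    (D L F n1 : ℕ) (hD : 1 ≤ D) (hL : 1 ≤ L)
    (N : Fin L → ℕ) (hN : ∀ l, 2 ≤ N l)
    (G : (l : Fin L) → (Fin D → ℕ) → Fin F → ℝ)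
    (γ : ℝ) (σ : ℝ → ℝ) (hσ : ∀ s t : ℝ, |σ s - σ t| ≤ γ * |s - t|)
    (W1 : Fin n1 → Fin L × Fin F → ℝ) (W2 : Fin n1 → ℝ) (bv : Fin n1 → ℝ)
    (hG : ∀ (l : Fin L) (z : Fin D → ℕ), (∑ j, |G l z j|) ≤ 1)
    (v1 v2 : Fin D → ℝ)
    (hv1 : ∀ d, v1 d ∈ Set.Ico (0 : ℝ) 1) (hv2 : ∀ d, v2 d ∈ Set.Ico (0 : ℝ) 1) :
    |mlp n1 σ W1 W2 bv (ngpEnc D L F N G v1) -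
        mlp n1 σ W1 W2 bv (ngpEnc D L F N G v2)| ≤
      2 ^ D * γ * ((∑ i, ∑ j, |W1 i j|) * (∑ i, |W2 i|)) * D *
        (∑ l, ((N l : ℝ) - 1)) * (∑ d, |v1 d - v2 d|) := by
  set x := ngpEnc D L F N G v1
  set y := ngpEnc D L F N G v2
  set S := ∑ d, |v1 d - v2 d| with hS
  set NN := ∑ l, ((N l : ℝ) - 1) with hNN
  have hS0 : 0 ≤ S := Finset.sum_nonneg fun d _ => abs_nonneg _
  have hterm : ∀ l : Fin L, (0:ℝ) ≤ (N l : ℝ) - 1 := by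
    intro l
    have : (2:ℝ) ≤ (N l : ℝ) := by exact_mod_cast hN l
    linarith
  have hNN0 : 0 ≤ NN := Finset.sum_nonneg fun l _ => hterm l
  have hγ : 0 ≤ γ := by
    have := hσ 0 1
    have h2 : |σ 0 - σ 1| ≥ 0 := abs_nonneg _
    have h3 : |(0:ℝ) - 1| = 1 := by norm_num
    rw [h3, mul_one] at this
    linarith
  -- componentwise bound
  have hxy : ∀ p : Fin L × Fin F, |x p - y p| ≤ 2 * NN * S := by
    intro p
    have hGb : ∀ z j, |G p.1 z j| ≤ 1 := by
      intro z j
      calc |G p.1 z j| ≤ ∑ j', |G p.1 z j'| :=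
          Finset.single_le_sum (f := fun j' => |G p.1 z j'|)
            (fun j' _ => abs_nonneg _) (Finset.mem_univ j)
        _ ≤ 1 := hG p.1 z
    calc |x p - y p| ≤ 2 * ((N p.1 : ℝ) - 1) * S :=
        interp_diff_le D F (N p.1) (hN p.1) (G p.1) hGb v1 v2 hv1 hv2 p.2
      _ ≤ 2 * NN * S := by
        apply mul_le_mul_of_nonneg_right _ hS0
        apply mul_le_mul_of_nonneg_left _ (by norm_num)
        exact Finset.single_le_sum (fun l _ => hterm l) (Finset.mem_univ p.1)
  have hC0 : 0 ≤ 2 * NN * S := by positivity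
  -- mlp bound
  have hmlp : |mlp n1 σ W1 W2 bv x - mlp n1 σ W1 W2 bv y|
      ≤ γ * ((∑ i, ∑ j, |W1 i j|) * (∑ i, |W2 i|)) * (2 * NN * S) := by
    rw [mlp, mlp, ← Finset.sum_sub_distrib]
    calc |∑ i, (W2 i * σ ((∑ j, W1 i j * x j) + bv i)
            - W2 i * σ ((∑ j, W1 i j * y j) + bv i))|
        ≤ ∑ i, |W2 i * σ ((∑ j, W1 i j * x j) + bv i)
            - W2 i * σ ((∑ j, W1 i j * y j) + bv i)| := Finset.abs_sum_le_sum_abs _ _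
      _ ≤ ∑ i, |W2 i| * ((γ * (∑ j, |W1 i j|)) * (2 * NN * S)) := by
          apply Finset.sum_le_sum
          intro i _
          rw [← mul_sub, abs_mul]
          apply mul_le_mul_of_nonneg_left _ (abs_nonneg _)
          calc |σ ((∑ j, W1 i j * x j) + bv i) - σ ((∑ j, W1 i j * y j) + bv i)|
              ≤ γ * |((∑ j, W1 i j * x j) + bv i) - ((∑ j, W1 i j * y j) + bv i)| :=
              hσ _ _
            _ = γ * |∑ j, W1 i j * (x j - y j)| := by
                have hsplit : ∑ j, W1 i j * (x j - y j)
                    = (∑ j, W1 i j * x j) - ∑ j, W1 i j * y j := by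
                  rw [← Finset.sum_sub_distrib]
                  exact Finset.sum_congr rfl fun j _ => by ring
                congr 1
                rw [hsplit]
                ring
            _ ≤ γ * ∑ j, |W1 i j| * (2 * NN * S) := by
                apply mul_le_mul_of_nonneg_left _ hγ
                calc |∑ j, W1 i j * (x j - y j)| ≤ ∑ j, |W1 i j * (x j - y j)| :=
                    Finset.abs_sum_le_sum_abs _ _
                  _ ≤ ∑ j, |W1 i j| * (2 * NN * S) := by
                    apply Finset.sum_le_sum
                    intro j _
                    rw [abs_mul]
                    exact mul_le_mul_of_nonneg_left (hxy j) (abs_nonneg _)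
            _ = (γ * (∑ j, |W1 i j|)) * (2 * NN * S) := by
                rw [← Finset.sum_mul]; ring
      _ ≤ ∑ i, |W2 i| * ((γ * (∑ i', ∑ j, |W1 i' j|)) * (2 * NN * S)) := by
          apply Finset.sum_le_sum
          intro i _
          apply mul_le_mul_of_nonneg_left _ (abs_nonneg _)
          apply mul_le_mul_of_nonneg_right _ hC0
          apply mul_le_mul_of_nonneg_left _ hγ
          exact Finset.single_le_sum (f := fun i' => ∑ j, |W1 i' j|)
            (fun i' _ => Finset.sum_nonneg fun j _ => abs_nonneg _) (Finset.mem_univ i)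
      _ = γ * ((∑ i, ∑ j, |W1 i j|) * (∑ i, |W2 i|)) * (2 * NN * S) := by
          rw [← Finset.sum_mul]; ring
  refine hmlp.trans ?_
  have hW1 : (0:ℝ) ≤ ∑ i, ∑ j, |W1 i j| :=
    Finset.sum_nonneg fun i _ => Finset.sum_nonneg fun j _ => abs_nonneg _
  have hW2 : (0:ℝ) ≤ ∑ i, |W2 i| := Finset.sum_nonneg fun i _ => abs_nonneg _
  have h2D : (2:ℝ) ≤ 2 ^ D * D := by
    have h1 : (2:ℝ) ≤ 2 ^ D := by
      calc (2:ℝ) = 2 ^ 1 := (pow_one 2).symm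
        _ ≤ 2 ^ D := pow_le_pow_right₀ (by norm_num) hD
    have h2 : (1:ℝ) ≤ (D:ℝ) := by exact_mod_cast hD
    nlinarith
  have key : γ * ((∑ i, ∑ j, |W1 i j|) * (∑ i, |W2 i|)) * (2 * NN * S)
      = 2 * (γ * ((∑ i, ∑ j, |W1 i j|) * (∑ i, |W2 i|)) * (NN * S)) := by ring
  have key2 : 2 ^ D * γ * ((∑ i, ∑ j, |W1 i j|) * (∑ i, |W2 i|)) * D * NN * S
      = (2 ^ D * D) * (γ * ((∑ i, ∑ j, |W1 i j|) * (∑ i, |W2 i|)) * (NN * S)) := by ring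
  rw [key, key2]
  apply mul_le_mul_of_nonneg_right h2D
  positivity
end

section
/- Let D, L ≥ 1, let N_l ≥ 2 for l = 1,…,L, and for each d = 1,…,D let H_d : [0,1) → ℝ^{R} (R = LF) be a one-dimensional multi-resolution grid encoding with grid tensors G_{l,d} ∈ ℝ^{N_l×F}. Define the GridTD encoding H_GridTD(v) = ⊙_{d=1}^{D} H_d(v[d]) ∈ ℝ^{R} (elementwise product). Let σ : ℝ → ℝ be γ-Lipschitz, W₁ ∈ ℝ^{n₁×R}, W₂ ∈ ℝ^{1×n₁}, b ∈ ℝ^{n₁}, and define (g_Θ∘H_GridTD)(v) = W₂ σ(W₁ H_GridTD(v) + b). Assume ‖G_{l,d}[z,:]‖_{ℓ1} ≤ 1 for every resolution l, dimension d, and vertex index z. Then for all v₁, v₂ ∈ [0,1)^D, |(g_Θ∘H_GridTD)(v₁) − (g_Θ∘H_GridTD)(v₂)| ≤ 2 γ η D N ‖v₁ − v₂‖_{ℓ1}, where η = ‖W₁‖_{ℓ1} ‖W₂‖_{ℓ1} and N = Σ_{l=1}^{L} (N_l − 1). -/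
open Finset

/-- One-dimensional linear interpolation at resolution `Nl` over a 1D grid tensor
`G : ℕ → Fin F → ℝ`: `h_l(x) = (1−u)·G[⌊(N_l−1)x⌋,:] + u·G[⌊(N_l−1)x⌋+1,:]`,
`u = (N_l−1)x − ⌊(N_l−1)x⌋`. -/
noncomputable def interp1 (F Nl : ℕ) (G : ℕ → Fin F → ℝ) (x : ℝ) : Fin F → ℝ :=
  fun j =>
    (1 - Int.fract (((Nl : ℝ) - 1) * x)) * G (⌊((Nl : ℝ) - 1) * x⌋).toNat j +
      Int.fract (((Nl : ℝ) - 1) * x) * G ((⌊((Nl : ℝ) - 1) * x⌋).toNat + 1) j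

/-- One-dimensional multi-resolution grid encoding `H_d : [0,1) → ℝ^{L×F}`. -/
noncomputable def enc1 (L F : ℕ) (N : Fin L → ℕ) (G : Fin L → ℕ → Fin F → ℝ) (x : ℝ) :
    Fin L × Fin F → ℝ :=
  fun p => interp1 F (N p.1) (G p.1) x p.2

/-- Tensor decomposed multi-resolution grid encoding (GridTD):
`H_GridTD(v) = ⊙_{d=1}^{D} H_d(v[d]) ∈ ℝ^{R}`, `R = LF` (elementwise product). -/
noncomputable def gridTDEnc (D L F : ℕ) (N : Fin L → ℕ)
    (G : Fin L → Fin D → ℕ → Fin F → ℝ) (v : Fin D → ℝ) : Fin L × Fin F → ℝ :=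
  fun p => ∏ d, enc1 L F N (fun l => G l d) (v d) p

noncomputable def fval (c : ℕ → ℝ) (a : ℝ) : ℝ :=
  (1 - Int.fract a) * c (⌊a⌋).toNat + Int.fract a * c ((⌊a⌋).toNat + 1)

lemma abs_sub_le_two' {x y : ℝ} (hx : |x| ≤ 1) (hy : |y| ≤ 1) : |x - y| ≤ 2 := by
  rw [abs_le] at hx hy ⊢
  constructor <;> linarith [hx.1, hx.2, hy.1, hy.2]

lemma fval_same (c : ℕ → ℝ) (hc : ∀ n, |c n| ≤ 1) (a b : ℝ) (hab : a ≤ b)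
    (hfl : ⌊a⌋ = ⌊b⌋) : |fval c a - fval c b| ≤ 2 * (b - a) := by
  have hcast : ((⌊a⌋ : ℝ)) = ((⌊b⌋ : ℝ)) := by rw [hfl]
  have hfr : Int.fract b - Int.fract a = b - a := by
    have h1 := Int.floor_add_fract a
    have h2 := Int.floor_add_fract b
    linarith
  have e : fval c a - fval c b =
      (b - a) * (c (⌊a⌋).toNat - c ((⌊a⌋).toNat + 1)) := by
    unfold fval
    rw [← hfl]
    linear_combination (c (⌊a⌋).toNat - c ((⌊a⌋).toNat + 1)) * hfr
  rw [e, abs_mul, abs_of_nonneg (by linarith : (0:ℝ) ≤ b - a)]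
  have h2 := abs_sub_le_two' (hc (⌊a⌋).toNat) (hc ((⌊a⌋).toNat + 1))
  nlinarith [abs_nonneg (c (⌊a⌋).toNat - c ((⌊a⌋).toNat + 1))]

lemma fval_intCast (c : ℕ → ℝ) (k : ℤ) : fval c ((k : ℝ)) = c k.toNat := by
  simp [fval, Int.fract_intCast, Int.floor_intCast]

lemma fval_cross (c : ℕ → ℝ) (hc : ∀ n, |c n| ≤ 1) (a : ℝ) (ha : 0 ≤ a) :
    |fval c a - fval c ((⌊a⌋ : ℝ) + 1)| ≤ 2 * (((⌊a⌋ : ℝ) + 1) - a) := by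
  have hk : 0 ≤ ⌊a⌋ := Int.floor_nonneg.mpr ha
  have h1 : ((⌊a⌋ : ℝ) + 1) = ((⌊a⌋ + 1 : ℤ) : ℝ) := by push_cast; ring
  have h2 : fval c ((⌊a⌋ : ℝ) + 1) = c ((⌊a⌋).toNat + 1) := by
    rw [h1, fval_intCast]
    congr 1
    omega
  have hu0 : 0 ≤ Int.fract a := Int.fract_nonneg a
  have hu1 : Int.fract a < 1 := Int.fract_lt_one a
  have hue : Int.fract a = a - ⌊a⌋ := by
    have := Int.floor_add_fract a; linarith
  have e : fval c a - fval c ((⌊a⌋ : ℝ) + 1)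
      = (1 - Int.fract a) * (c (⌊a⌋).toNat - c ((⌊a⌋).toNat + 1)) := by
    rw [h2]; unfold fval; ring
  rw [e, abs_mul, abs_of_nonneg (by linarith : (0:ℝ) ≤ 1 - Int.fract a)]
  have h3 := abs_sub_le_two' (hc (⌊a⌋).toNat) (hc ((⌊a⌋).toNat + 1))
  nlinarith [abs_nonneg (c (⌊a⌋).toNat - c ((⌊a⌋).toNat + 1))]

lemma fval_lip (c : ℕ → ℝ) (hc : ∀ n, |c n| ≤ 1) :
    ∀ n : ℕ, ∀ a b : ℝ, 0 ≤ a → a ≤ b → (⌊b⌋ - ⌊a⌋).toNat ≤ n →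
      |fval c a - fval c b| ≤ 2 * (b - a) := by
  intro n
  induction n with
  | zero =>
    intro a b ha hab hn
    have hm := Int.floor_mono hab
    have hfl : ⌊a⌋ = ⌊b⌋ := by omega
    exact fval_same c hc a b hab hfl
  | succ n ih =>
    intro a b ha hab hn
    by_cases hfl : ⌊a⌋ = ⌊b⌋
    · exact fval_same c hc a b hab hfl
    · have hlt : ⌊a⌋ < ⌊b⌋ := lt_of_le_of_ne (Int.floor_mono hab) hfl
      set m : ℝ := (⌊a⌋ : ℝ) + 1 with hm
      have hma : a < m := Int.lt_floor_add_one a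
      have hmb : m ≤ b := by
        have h' : (⌊a⌋ + 1 : ℤ) ≤ ⌊b⌋ := hlt
        have h'' := Int.le_floor.mp h'
        push_cast at h''
        linarith
      have h0m : 0 ≤ m := by
        have hk : (0:ℤ) ≤ ⌊a⌋ := Int.floor_nonneg.mpr ha
        have hk' : (0:ℝ) ≤ (⌊a⌋ : ℝ) := by exact_mod_cast hk
        linarith
      have hfm : ⌊m⌋ = ⌊a⌋ + 1 := by
        rw [hm, show ((⌊a⌋:ℝ) + 1) = ((⌊a⌋ + 1 : ℤ) : ℝ) by push_cast; ring,
          Int.floor_intCast]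
      have h1 := fval_cross c hc a ha
      have h2 := ih m b h0m hmb (by rw [hfm]; omega)
      calc |fval c a - fval c b|
          ≤ |fval c a - fval c m| + |fval c m - fval c b| := abs_sub_le _ _ _
      _ ≤ 2 * (m - a) + 2 * (b - m) := add_le_add h1 h2
      _ = 2 * (b - a) := by ring

lemma interp1_eq_fval (F Nl : ℕ) (G : ℕ → Fin F → ℝ) (x : ℝ) (j : Fin F) :
    interp1 F Nl G x j = fval (fun n => G n j) (((Nl : ℝ) - 1) * x) := rfl

lemma interp1_abs_le (F Nl : ℕ) (G : ℕ → Fin F → ℝ) (hc : ∀ z j, |G z j| ≤ 1)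
    (x : ℝ) (j : Fin F) : |interp1 F Nl G x j| ≤ 1 := by
  rw [interp1_eq_fval]
  set a := ((Nl : ℝ) - 1) * x with ha
  have hu0 : 0 ≤ Int.fract a := Int.fract_nonneg a
  have hu1 : Int.fract a < 1 := Int.fract_lt_one a
  have h1 := hc (⌊a⌋).toNat j
  have h2 := hc ((⌊a⌋).toNat + 1) j
  rw [abs_le] at h1 h2
  unfold fval
  rw [abs_le]
  constructor <;> nlinarith [h1.1, h1.2, h2.1, h2.2]

lemma interp1_lip (F Nl : ℕ) (hNl : 2 ≤ Nl) (G : ℕ → Fin F → ℝ)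
    (hc : ∀ z j, |G z j| ≤ 1) (x y : ℝ) (hx : 0 ≤ x) (hy : 0 ≤ y) (j : Fin F) :
    |interp1 F Nl G x j - interp1 F Nl G y j| ≤ 2 * ((Nl : ℝ) - 1) * |x - y| := by
  have hN : (0:ℝ) ≤ (Nl : ℝ) - 1 := by
    have : (2:ℝ) ≤ (Nl : ℝ) := by exact_mod_cast hNl
    linarith
  have key : ∀ s t : ℝ, 0 ≤ s → s ≤ t →
      |interp1 F Nl G s j - interp1 F Nl G t j| ≤ 2 * ((Nl : ℝ) - 1) * (t - s) := by
    intro s t hs hst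
    rw [interp1_eq_fval, interp1_eq_fval]
    have h := fval_lip (fun n => G n j) (fun n => hc n j)
      (⌊((Nl:ℝ)-1) * t⌋ - ⌊((Nl:ℝ)-1) * s⌋).toNat (((Nl:ℝ)-1) * s) (((Nl:ℝ)-1) * t)
      (mul_nonneg hN hs) (mul_le_mul_of_nonneg_left hst hN) le_rfl
    calc |fval (fun n => G n j) (((Nl:ℝ)-1)*s) - fval (fun n => G n j) (((Nl:ℝ)-1)*t)|
        ≤ 2 * (((Nl:ℝ)-1)*t - ((Nl:ℝ)-1)*s) := h
    _ = 2 * ((Nl:ℝ)-1) * (t - s) := by ring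
  rcases le_total x y with h | h
  · rw [abs_of_nonpos (by linarith : x - y ≤ 0)]
    calc |interp1 F Nl G x j - interp1 F Nl G y j|
        ≤ 2 * ((Nl:ℝ)-1) * (y - x) := key x y hx h
    _ = 2 * ((Nl:ℝ)-1) * -(x - y) := by ring
  · rw [abs_of_nonneg (by linarith : (0:ℝ) ≤ x - y), abs_sub_comm]
    exact key y x hy h

lemma abs_prod_sub_prod_le {ι : Type*} (s : Finset ι) (f g : ι → ℝ) :
    (∀ i ∈ s, |f i| ≤ 1) → (∀ i ∈ s, |g i| ≤ 1) →
    |(∏ i ∈ s, f i) - ∏ i ∈ s, g i| ≤ ∑ i ∈ s, |f i - g i| := by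
  induction s using Finset.cons_induction with
  | empty => simp
  | cons a s ha ih =>
    intro hf hg
    rw [prod_cons, prod_cons, sum_cons]
    have hga := hg a (mem_cons_self a s)
    have hf' : ∀ i ∈ s, |f i| ≤ 1 := fun i hi => hf i (mem_cons.mpr (Or.inr hi))
    have hg' : ∀ i ∈ s, |g i| ≤ 1 := fun i hi => hg i (mem_cons.mpr (Or.inr hi))
    have hPf : |∏ i ∈ s, f i| ≤ 1 := by
      rw [Finset.abs_prod]
      exact Finset.prod_le_one (fun i _ => abs_nonneg _) (fun i hi => hf' i hi)
    have ih' := ih hf' hg'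
    have e : f a * ∏ i ∈ s, f i - g a * ∏ i ∈ s, g i
        = (f a - g a) * ∏ i ∈ s, f i + g a * ((∏ i ∈ s, f i) - ∏ i ∈ s, g i) := by ring
    calc |f a * ∏ i ∈ s, f i - g a * ∏ i ∈ s, g i|
        ≤ |f a - g a| * |∏ i ∈ s, f i| + |g a| * |(∏ i ∈ s, f i) - ∏ i ∈ s, g i| := by
          rw [e]
          exact (abs_add_le _ _).trans (by rw [abs_mul, abs_mul])
    _ ≤ |f a - g a| * 1 + 1 * ∑ i ∈ s, |f i - g i| :=
          add_le_add (mul_le_mul_of_nonneg_left hPf (abs_nonneg _))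
            (mul_le_mul hga ih' (abs_nonneg _) zero_le_one)
    _ = |f a - g a| + ∑ i ∈ s, |f i - g i| := by ring

/-- **Lipschitz smooth bound for GridTD.** If `σ` is `γ`-Lipschitz and the feature vector
at every grid vertex of every 1D grid has ℓ1 norm at most 1, then
`|(g_Θ∘H_GridTD)(v₁) − (g_Θ∘H_GridTD)(v₂)| ≤ 2 γ η D N ‖v₁−v₂‖₁` with
`η = ‖W₁‖₁‖W₂‖₁` and `N = Σ_l (N_l − 1)`. -/
theorem gridTD_lipschitz_bound
    (D L F n1 : ℕ) (hD : 1 ≤ D) (hL : 1 ≤ L)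
    (N : Fin L → ℕ) (hN : ∀ l, 2 ≤ N l)
    (G : Fin L → Fin D → ℕ → Fin F → ℝ)
    (γ : ℝ) (σ : ℝ → ℝ) (hσ : ∀ s t : ℝ, |σ s - σ t| ≤ γ * |s - t|)
    (W1 : Fin n1 → Fin L × Fin F → ℝ) (W2 : Fin n1 → ℝ) (bv : Fin n1 → ℝ)
    (hG : ∀ (l : Fin L) (d : Fin D) (z : ℕ), (∑ j, |G l d z j|) ≤ 1)
    (v1 v2 : Fin D → ℝ)
    (hv1 : ∀ d, v1 d ∈ Set.Ico (0 : ℝ) 1) (hv2 : ∀ d, v2 d ∈ Set.Ico (0 : ℝ) 1) :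
    |mlp n1 σ W1 W2 bv (gridTDEnc D L F N G v1) -
        mlp n1 σ W1 W2 bv (gridTDEnc D L F N G v2)| ≤
      2 * γ * ((∑ i, ∑ j, |W1 i j|) * (∑ i, |W2 i|)) * D *
        (∑ l, ((N l : ℝ) - 1)) * (∑ d, |v1 d - v2 d|) := by
  classical
  have hγ : 0 ≤ γ := by
    have h := hσ 0 1
    simp at h
    exact le_trans (abs_nonneg _) h
  have hGj : ∀ (l : Fin L) (d : Fin D) (z : ℕ) (j : Fin F), |G l d z j| ≤ 1 := fun l d z j =>
    le_trans (Finset.single_le_sum (fun i _ => abs_nonneg (G l d z i)) (mem_univ j)) (hG l d z)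
  set S := ∑ d, |v1 d - v2 d| with hS
  set Ntot := ∑ l, ((N l : ℝ) - 1) with hNt
  have hNl1 : ∀ l : Fin L, (1:ℝ) ≤ (N l : ℝ) - 1 := by
    intro l
    have h2 : (2:ℝ) ≤ (N l : ℝ) := by exact_mod_cast hN l
    linarith
  have hNtnn : (0:ℝ) ≤ Ntot := sum_nonneg fun l _ => by linarith [hNl1 l]
  have hSnn : 0 ≤ S := sum_nonneg fun d _ => abs_nonneg _
  have hNle : ∀ l : Fin L, ((N l : ℝ) - 1) ≤ Ntot := by
    intro l
    rw [hNt]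
    exact Finset.single_le_sum (f := fun i : Fin L => ((N i : ℝ) - 1))
      (fun i _ => le_trans zero_le_one (hNl1 i)) (mem_univ l)
  have hΔ : ∀ p : Fin L × Fin F,
      |gridTDEnc D L F N G v1 p - gridTDEnc D L F N G v2 p| ≤ 2 * Ntot * S := by
    intro p
    have h1 : |gridTDEnc D L F N G v1 p - gridTDEnc D L F N G v2 p| ≤
        ∑ d, |enc1 L F N (fun l => G l d) (v1 d) p - enc1 L F N (fun l => G l d) (v2 d) p| := by
      apply abs_prod_sub_prod_le
      · exact fun d _ => interp1_abs_le F (N p.1) (G p.1 d) (fun z j => hGj p.1 d z j) (v1 d) p.2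
      · exact fun d _ => interp1_abs_le F (N p.1) (G p.1 d) (fun z j => hGj p.1 d z j) (v2 d) p.2
    have h2 : ∀ d : Fin D,
        |enc1 L F N (fun l => G l d) (v1 d) p - enc1 L F N (fun l => G l d) (v2 d) p| ≤
          2 * ((N p.1 : ℝ) - 1) * |v1 d - v2 d| := fun d =>
      interp1_lip F (N p.1) (hN p.1) (G p.1 d) (fun z j => hGj p.1 d z j)
        (v1 d) (v2 d) (hv1 d).1 (hv2 d).1 p.2
    calc |gridTDEnc D L F N G v1 p - gridTDEnc D L F N G v2 p|
        ≤ ∑ d, 2 * ((N p.1 : ℝ) - 1) * |v1 d - v2 d| :=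
          h1.trans (sum_le_sum fun d _ => h2 d)
    _ = 2 * ((N p.1 : ℝ) - 1) * S := by rw [hS, mul_sum]
    _ ≤ 2 * Ntot * S := by nlinarith [hNle p.1]
  set E1 := gridTDEnc D L F N G v1 with hE1
  set E2 := gridTDEnc D L F N G v2 with hE2
  set A1 : Fin n1 → ℝ := fun i => (∑ j, W1 i j * E1 j) + bv i with hA1
  set A2 : Fin n1 → ℝ := fun i => (∑ j, W1 i j * E2 j) + bv i with hA2
  have hAd : ∀ i, |A1 i - A2 i| ≤ (∑ j, |W1 i j|) * (2 * Ntot * S) := by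
    intro i
    have e : A1 i - A2 i = ∑ j, W1 i j * (E1 j - E2 j) := by
      simp only [hA1, hA2, mul_sub, Finset.sum_sub_distrib]
      ring
    rw [e]
    calc |∑ j, W1 i j * (E1 j - E2 j)| ≤ ∑ j, |W1 i j * (E1 j - E2 j)| :=
          Finset.abs_sum_le_sum_abs _ _
    _ = ∑ j, |W1 i j| * |E1 j - E2 j| := by simp [abs_mul]
    _ ≤ ∑ j, |W1 i j| * (2 * Ntot * S) :=
          sum_le_sum fun j _ => mul_le_mul_of_nonneg_left (hΔ j) (abs_nonneg _)
    _ = (∑ j, |W1 i j|) * (2 * Ntot * S) := by rw [sum_mul]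
  have hmlp : mlp n1 σ W1 W2 bv E1 - mlp n1 σ W1 W2 bv E2
      = ∑ i, W2 i * (σ (A1 i) - σ (A2 i)) := by
    simp only [mlp, hA1, hA2, mul_sub, Finset.sum_sub_distrib]
  rw [hmlp]
  set T1 := ∑ i, ∑ j, |W1 i j| with hT1
  set T2 := ∑ i, |W2 i| with hT2
  have hT1nn : 0 ≤ T1 := sum_nonneg fun i _ => sum_nonneg fun j _ => abs_nonneg _
  have hT2nn : 0 ≤ T2 := sum_nonneg fun i _ => abs_nonneg _
  have hWi : ∀ i, (∑ j, |W1 i j|) ≤ T1 := by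
    intro i
    rw [hT1]
    exact Finset.single_le_sum (f := fun i : Fin n1 => ∑ j, |W1 i j|)
      (fun i _ => sum_nonneg fun j _ => abs_nonneg _) (mem_univ i)
  have hBnn : (0:ℝ) ≤ 2 * Ntot * S := by positivity
  have step1 : |∑ i, W2 i * (σ (A1 i) - σ (A2 i))| ≤
      ∑ i, |W2 i| * (γ * (T1 * (2 * Ntot * S))) := by
    calc |∑ i, W2 i * (σ (A1 i) - σ (A2 i))|
        ≤ ∑ i, |W2 i * (σ (A1 i) - σ (A2 i))| := Finset.abs_sum_le_sum_abs _ _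
    _ = ∑ i, |W2 i| * |σ (A1 i) - σ (A2 i)| := by simp [abs_mul]
    _ ≤ ∑ i, |W2 i| * (γ * (T1 * (2 * Ntot * S))) := by
        refine sum_le_sum fun i _ => mul_le_mul_of_nonneg_left ?_ (abs_nonneg _)
        calc |σ (A1 i) - σ (A2 i)| ≤ γ * |A1 i - A2 i| := hσ _ _
        _ ≤ γ * ((∑ j, |W1 i j|) * (2 * Ntot * S)) :=
            mul_le_mul_of_nonneg_left (hAd i) hγ
        _ ≤ γ * (T1 * (2 * Ntot * S)) :=
            mul_le_mul_of_nonneg_left (mul_le_mul_of_nonneg_right (hWi i) hBnn) hγ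
  refine step1.trans ?_
  rw [← Finset.sum_mul]
  have hD1 : (1:ℝ) ≤ (D : ℝ) := by exact_mod_cast hD
  have hP : 0 ≤ γ * T1 * T2 * Ntot * S :=
    mul_nonneg (mul_nonneg (mul_nonneg (mul_nonneg hγ hT1nn) hT2nn) hNtnn) hSnn
  nlinarith [hP, hD1]
end

section
/- Let Y ∈ ℝ^{n₁×n₂}, M_t ∈ {0,1}^{n₁×n₂} for t = 1,…,n₃, κ > 1, ρ¹ > 0, α₂ > 0, and set ρ^{k+1} = κρ^k. Consider sequences {𝒳^k, 𝒱^k, 𝒰^k} in ℝ^{n₁×n₂×n₃} generated as follows: 𝒳^{k+1} is the unique minimizer of 𝒳 ↦ (1/2)‖Y − Σ_{t=1}^{n₃} M_t ⊙ 𝒳_t‖_F² + (ρ^k/2)‖𝒳 − 𝒱^k + 𝒰^k‖_F²; 𝒱^{k+1} is any point satisfying ‖𝒱^{k+1} − (𝒳^{k+1} + 𝒰^k)‖_F ≤ α₂/ρ^k; and 𝒰^{k+1} = 𝒰^k + 𝒳^{k+1} − 𝒱^{k+1}. Then there exists a fixed point (𝒳*, 𝒱*, 𝒰*) such that ‖𝒳^k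 − 𝒳*‖_F → 0, ‖𝒱^k − 𝒱*‖_F → 0 and ‖𝒰^k − 𝒰*‖_F → 0 as k → ∞. -/
open Finset Filter

/-- Frobenius norm of a third-order tensor (stored slice-wise). -/
noncomputable def frob3 (n1 n2 n3 : ℕ) (X : Fin n3 → Fin n1 → Fin n2 → ℝ) : ℝ :=
  Real.sqrt (∑ t, ∑ i, ∑ j, (X t i j) ^ 2)

/-- Objective of the 𝒳-subproblem of the GridTD plug-and-play ADMM for video SCI:
`(1/2)‖Y − Σ_t M_t ⊙ 𝒳_t‖_F² + (ρ/2)‖𝒳 − 𝒱 + 𝒰‖_F²`. -/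
noncomputable def admmObj (n1 n2 n3 : ℕ) (Y : Fin n1 → Fin n2 → ℝ)
    (M : Fin n3 → Fin n1 → Fin n2 → ℝ) (ρ : ℝ)
    (V U : Fin n3 → Fin n1 → Fin n2 → ℝ) (X : Fin n3 → Fin n1 → Fin n2 → ℝ) : ℝ :=
  (1 / 2) * (∑ i, ∑ j, (Y i j - ∑ t, M t i j * X t i j) ^ 2) +
    (ρ / 2) * (∑ t, ∑ i, ∑ j, (X t i j - V t i j + U t i j) ^ 2)

namespace GridTDAux
variable {n1 n2 n3 : ℕ}

noncomputable def emb (n1 n2 n3 : ℕ) (X : Fin n3 → Fin n1 → Fin n2 → ℝ) :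
    EuclideanSpace ℝ (Fin n3 × Fin n1 × Fin n2) := WithLp.toLp 2 (fun p => X p.1 p.2.1 p.2.2)

lemma emb_sub (A B : Fin n3 → Fin n1 → Fin n2 → ℝ) :
    emb n1 n2 n3 (A - B) = emb n1 n2 n3 A - emb n1 n2 n3 B := rfl

lemma emb_add (A B : Fin n3 → Fin n1 → Fin n2 → ℝ) :
    emb n1 n2 n3 (A + B) = emb n1 n2 n3 A + emb n1 n2 n3 B := rfl

lemma normSq_emb (W : Fin n3 → Fin n1 → Fin n2 → ℝ) :
    ‖emb n1 n2 n3 W‖ ^ 2 = ∑ t, ∑ i, ∑ j, (W t i j) ^ 2 := by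
  rw [EuclideanSpace.norm_eq, Real.sq_sqrt (by positivity)]
  rw [Fintype.sum_prod_type]
  refine Finset.sum_congr rfl fun t _ => ?_
  rw [Fintype.sum_prod_type]
  refine Finset.sum_congr rfl fun i _ => Finset.sum_congr rfl fun j _ => ?_
  simp [emb, sq_abs]

lemma frob3_emb (W : Fin n3 → Fin n1 → Fin n2 → ℝ) :
    frob3 n1 n2 n3 W = ‖emb n1 n2 n3 W‖ := by
  rw [frob3, ← normSq_emb, Real.sqrt_sq (norm_nonneg _)]

lemma sqrt_add_le (a b : ℝ) (ha : 0 ≤ a) (hb : 0 ≤ b) :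
    Real.sqrt (a + b) ≤ Real.sqrt a + Real.sqrt b := by
  rw [← Real.sqrt_sq (by positivity : (0:ℝ) ≤ Real.sqrt a + Real.sqrt b)]
  apply Real.sqrt_le_sqrt
  nlinarith [Real.sq_sqrt ha, Real.sq_sqrt hb, Real.sqrt_nonneg a, Real.sqrt_nonneg b]

lemma sum_swap3 (f : Fin n1 → Fin n2 → Fin n3 → ℝ) :
    ∑ i, ∑ j, ∑ t, f i j t = ∑ t, ∑ i, ∑ j, f i j t := by
  rw [show (∑ i, ∑ j, ∑ t, f i j t) = ∑ i, ∑ t, ∑ j, f i j t from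
    Finset.sum_congr rfl fun i _ => Finset.sum_comm]
  exact Finset.sum_comm

end GridTDAux

open GridTDAux in
set_option maxHeartbeats 1000000 in
/-- **Fixed point convergence of the GridTD-induced plug-and-play ADMM for video SCI.**
With geometrically increasing penalty `ρ^{k+1} = κρ^k` (`κ > 1`), exact unique
minimization in the `𝒳`-subproblem, an inexact `𝒱`-subproblem solved within accuracy
`α₂/ρ^k`, and multiplier update `𝒰^{k+1} = 𝒰^k + 𝒳^{k+1} − 𝒱^{k+1}`, the sequence
`{𝒳^k, 𝒱^k, 𝒰^k}` converges to a fixed point `{𝒳*, 𝒱*, 𝒰*}`. -/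
theorem gridTD_admm_fixed_point_convergence
    (n1 n2 n3 : ℕ) (Y : Fin n1 → Fin n2 → ℝ)
    (M : Fin n3 → Fin n1 → Fin n2 → ℝ)
    (hM : ∀ t i j, M t i j = 0 ∨ M t i j = 1)
    (κ : ℝ) (hκ : 1 < κ)
    (ρ : ℕ → ℝ) (hρ1 : 0 < ρ 1) (hρ : ∀ k ≥ 1, ρ (k + 1) = κ * ρ k)
    (α₂ : ℝ) (hα : 0 < α₂)
    (X V U : ℕ → Fin n3 → Fin n1 → Fin n2 → ℝ)
    (hXmin : ∀ k ≥ 1, ∀ Z : Fin n3 → Fin n1 → Fin n2 → ℝ, Z ≠ X (k + 1) →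
      admmObj n1 n2 n3 Y M (ρ k) (V k) (U k) (X (k + 1)) <
        admmObj n1 n2 n3 Y M (ρ k) (V k) (U k) Z)
    (hV : ∀ k ≥ 1, frob3 n1 n2 n3 (V (k + 1) - (X (k + 1) + U k)) ≤ α₂ / ρ k)
    (hU : ∀ k ≥ 1, U (k + 1) = U k + X (k + 1) - V (k + 1)) :
    ∃ Xs Vs Us : Fin n3 → Fin n1 → Fin n2 → ℝ,
      Tendsto (fun k => frob3 n1 n2 n3 (X k - Xs)) atTop (nhds 0) ∧
      Tendsto (fun k => frob3 n1 n2 n3 (V k - Vs)) atTop (nhds 0) ∧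
      Tendsto (fun k => frob3 n1 n2 n3 (U k - Us)) atTop (nhds 0) := by
  classical
  have hκ0 : (0:ℝ) < κ := lt_trans one_pos hκ
  set e : (Fin n3 → Fin n1 → Fin n2 → ℝ) → EuclideanSpace ℝ (Fin n3 × Fin n1 × Fin n2) :=
    emb n1 n2 n3 with he
  -- the geometric ratio
  have hsκ : 1 < Real.sqrt κ := by nlinarith [Real.sq_sqrt hκ0.le, Real.sqrt_nonneg κ]
  set q : ℝ := (Real.sqrt κ)⁻¹ with hqdef
  have hq0 : 0 < q := inv_pos.mpr (lt_trans one_pos hsκ)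
  have hq1 : q < 1 := inv_lt_one_of_one_lt₀ hsκ
  have hq2 : q ^ 2 = κ⁻¹ := by
    rw [hqdef, inv_pow, Real.sq_sqrt hκ0.le]
  -- formula for ρ
  have hρf : ∀ m : ℕ, ρ (m + 1) = ρ 1 * κ ^ m := by
    intro m
    induction m with
    | zero => simp
    | succ m ih =>
      rw [hρ (m + 1) (Nat.succ_le_succ (Nat.zero_le m)), ih]; ring
  have hρpos : ∀ m : ℕ, 0 < ρ (m + 1) := fun m => by rw [hρf]; positivity
  have hρinv : ∀ m : ℕ, (ρ (m + 1))⁻¹ = (ρ 1)⁻¹ * q ^ (2 * m) := by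
    intro m
    rw [hρf, mul_inv, ← inv_pow, ← hq2, ← pow_mul]
  have hsρinv : ∀ m : ℕ, (Real.sqrt (ρ (m + 1)))⁻¹ = (Real.sqrt (ρ 1))⁻¹ * q ^ m := by
    intro m
    rw [hρf, Real.sqrt_mul hρ1.le,
      show κ ^ m = ((Real.sqrt κ) ^ m) ^ 2 by
        rw [← pow_mul, mul_comm m 2, pow_mul, Real.sq_sqrt hκ0.le],
      Real.sqrt_sq (pow_nonneg (Real.sqrt_nonneg κ) m), mul_inv, ← inv_pow, hqdef]
  -- the constants
  set CY : ℝ := Real.sqrt (2 * ∑ i, ∑ j, (Y i j) ^ 2) with hCY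
  set CM : ℝ := Real.sqrt (2 * n3) with hCM
  have hCY0 : 0 ≤ CY := Real.sqrt_nonneg _
  have hCM0 : 0 ≤ CM := Real.sqrt_nonneg _
  -- Fact A : distance of the exact minimizer to V^k - U^k
  have hA : ∀ m : ℕ,
      ‖e (X (m + 2)) - (e (V (m + 1)) - e (U (m + 1)))‖ ≤
        (CY + CM * ‖e (V (m + 1)) - e (U (m + 1))‖) * ((Real.sqrt (ρ 1))⁻¹ * q ^ m) := by
    intro m
    set Z : Fin n3 → Fin n1 → Fin n2 → ℝ := V (m + 1) - U (m + 1) with hZ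
    set d : EuclideanSpace ℝ (Fin n3 × Fin n1 × Fin n2) := e (V (m + 1)) - e (U (m + 1)) with hd
    have hdZ : e Z = d := by rw [hZ, hd, he, emb_sub]
    have hle : admmObj n1 n2 n3 Y M (ρ (m + 1)) (V (m + 1)) (U (m + 1)) (X (m + 2)) ≤
        admmObj n1 n2 n3 Y M (ρ (m + 1)) (V (m + 1)) (U (m + 1)) Z := by
      by_cases hZX : Z = X (m + 2)
      · rw [hZX]
      · exact (hXmin (m + 1) (Nat.succ_le_succ (Nat.zero_le m)) Z hZX).le
    rw [admmObj, admmObj] at hle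
    have hZ0 : ∑ t, ∑ i, ∑ j, (Z t i j - V (m + 1) t i j + U (m + 1) t i j) ^ 2 = 0 := by
      refine Finset.sum_eq_zero fun t _ => Finset.sum_eq_zero fun i _ =>
        Finset.sum_eq_zero fun j _ => ?_
      have : Z t i j = V (m + 1) t i j - U (m + 1) t i j := rfl
      rw [this]; ring
    rw [hZ0, mul_zero, add_zero] at hle
    set Q : ℝ := ∑ t, ∑ i, ∑ j, (X (m + 2) t i j - V (m + 1) t i j + U (m + 1) t i j) ^ 2
      with hQ
    set S2 : ℝ := ∑ i, ∑ j, (Y i j - ∑ t, M t i j * Z t i j) ^ 2 with hS2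
    have hS1nn : (0:ℝ) ≤ ∑ i, ∑ j, (Y i j - ∑ t, M t i j * X (m + 2) t i j) ^ 2 := by
      positivity
    have hQS2 : ρ (m + 1) * Q ≤ S2 := by nlinarith [hle, hS1nn]
    -- identify Q with a squared norm
    have hQeq : Q = ‖e (X (m + 2)) - d‖ ^ 2 := by
      rw [hd, he, ← emb_sub, ← emb_sub, normSq_emb]
      refine Finset.sum_congr rfl fun t _ => Finset.sum_congr rfl fun i _ =>
        Finset.sum_congr rfl fun j _ => ?_
      have : (X (m + 2) - (V (m + 1) - U (m + 1))) t i j =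
          X (m + 2) t i j - (V (m + 1) t i j - U (m + 1) t i j) := rfl
      rw [this]; ring
    -- bound S2
    have hptS2 : S2 ≤ 2 * (∑ i, ∑ j, (Y i j) ^ 2) + 2 * n3 * ‖d‖ ^ 2 := by
      have hpt : ∀ i j, (Y i j - ∑ t, M t i j * Z t i j) ^ 2 ≤
          2 * (Y i j) ^ 2 + 2 * n3 * ∑ t, (Z t i j) ^ 2 := by
        intro i j
        have hcs : (∑ t, M t i j * Z t i j) ^ 2 ≤
            (∑ t, (M t i j) ^ 2) * (∑ t, (Z t i j) ^ 2) :=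
          Finset.sum_mul_sq_le_sq_mul_sq _ _ _
        have hM2 : (∑ t, (M t i j) ^ 2) ≤ (n3 : ℝ) := by
          calc (∑ t, (M t i j) ^ 2) ≤ ∑ _t : Fin n3, (1:ℝ) := by
                refine Finset.sum_le_sum fun t _ => ?_
                rcases hM t i j with h | h <;> simp [h]
            _ = (n3 : ℝ) := by simp
        have hZnn : (0:ℝ) ≤ ∑ t, (Z t i j) ^ 2 := by positivity
        nlinarith [sq_nonneg (Y i j + ∑ t, M t i j * Z t i j),
          mul_le_mul_of_nonneg_right hM2 hZnn]
      calc S2 ≤ ∑ i, ∑ j, (2 * (Y i j) ^ 2 + 2 * n3 * ∑ t, (Z t i j) ^ 2) :=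
            Finset.sum_le_sum fun i _ => Finset.sum_le_sum fun j _ => hpt i j
        _ = 2 * (∑ i, ∑ j, (Y i j) ^ 2) + 2 * n3 * (∑ i, ∑ j, ∑ t, (Z t i j) ^ 2) := by
            simp only [Finset.sum_add_distrib, Finset.mul_sum]
        _ = 2 * (∑ i, ∑ j, (Y i j) ^ 2) + 2 * n3 * ‖d‖ ^ 2 := by
            rw [sum_swap3 (fun i j t => (Z t i j) ^ 2), ← hdZ, he, normSq_emb]
    -- put things together
    have hQle : ‖e (X (m + 2)) - d‖ ^ 2 ≤ S2 * (ρ (m + 1))⁻¹ := by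
      rw [← hQeq]
      rw [le_mul_inv_iff₀ (hρpos m), mul_comm]
      exact hQS2
    have hS2nn : (0:ℝ) ≤ S2 := by rw [hS2]; positivity
    have h2 : ‖e (X (m + 2)) - d‖ ≤ Real.sqrt (S2 * (ρ (m + 1))⁻¹) := by
      have := Real.sqrt_le_sqrt hQle
      rwa [Real.sqrt_sq (norm_nonneg _)] at this
    have h3 : Real.sqrt (S2 * (ρ (m + 1))⁻¹) =
        Real.sqrt S2 * (Real.sqrt (ρ (m + 1)))⁻¹ := by
      rw [Real.sqrt_mul hS2nn, Real.sqrt_inv]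
    have h4 : Real.sqrt S2 ≤ CY + CM * ‖d‖ := by
      calc Real.sqrt S2 ≤
            Real.sqrt (2 * (∑ i, ∑ j, (Y i j) ^ 2) + 2 * n3 * ‖d‖ ^ 2) :=
              Real.sqrt_le_sqrt hptS2
        _ ≤ Real.sqrt (2 * (∑ i, ∑ j, (Y i j) ^ 2)) + Real.sqrt (2 * n3 * ‖d‖ ^ 2) :=
              sqrt_add_le _ _ (by positivity) (by positivity)
        _ = CY + CM * ‖d‖ := by
              rw [hCY, hCM]
              congr 1
              rw [Real.sqrt_mul (by positivity : (0:ℝ) ≤ 2 * n3),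
                Real.sqrt_sq (norm_nonneg _)]
    calc ‖e (X (m + 2)) - d‖ ≤ Real.sqrt S2 * (Real.sqrt (ρ (m + 1)))⁻¹ := by
          rw [← h3]; exact h2
      _ ≤ (CY + CM * ‖d‖) * (Real.sqrt (ρ (m + 1)))⁻¹ :=
          mul_le_mul_of_nonneg_right h4 (by positivity)
      _ = (CY + CM * ‖d‖) * ((Real.sqrt (ρ 1))⁻¹ * q ^ m) := by rw [hsρinv m]
  -- Fact B : inexactness of the V-step
  have hε : ∀ m : ℕ,
      ‖e (V (m + 2)) - (e (X (m + 2)) + e (U (m + 1)))‖ ≤ α₂ * ((ρ 1)⁻¹ * q ^ (2 * m)) := by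
    intro m
    have h := hV (m + 1) (Nat.succ_le_succ (Nat.zero_le m))
    rw [frob3_emb] at h
    rw [he, ← emb_add, ← emb_sub]
    calc ‖emb n1 n2 n3 (V (m + 2) - (X (m + 2) + U (m + 1)))‖ ≤ α₂ / ρ (m + 1) := h
      _ = α₂ * ((ρ 1)⁻¹ * q ^ (2 * m)) := by rw [div_eq_mul_inv, hρinv m]
  -- Fact C : multiplier update in the Euclidean space
  have hUe : ∀ m : ℕ, e (U (m + 2)) = e (U (m + 1)) + e (X (m + 2)) - e (V (m + 2)) := by
    intro m
    have h := hU (m + 1) (Nat.succ_le_succ (Nat.zero_le m))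
    rw [he, h, emb_sub, emb_add]
  have hUb : ∀ m : ℕ, ‖e (U (m + 2))‖ ≤ α₂ * ((ρ 1)⁻¹ * q ^ (2 * m)) := by
    intro m
    have h1 : e (U (m + 2)) = -(e (V (m + 2)) - (e (X (m + 2)) + e (U (m + 1)))) := by
      rw [hUe m]; abel
    rw [h1, norm_neg]
    exact hε m
  -- the sequence D
  set D : ℕ → EuclideanSpace ℝ (Fin n3 × Fin n1 × Fin n2) :=
    fun j => e (V (j + 2)) - e (U (j + 2)) with hD
  set C₀ : ℝ := CY * ((Real.sqrt (ρ 1))⁻¹ * q) + 3 * α₂ * (ρ 1)⁻¹ with hC₀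
  set C₁ : ℝ := CM * ((Real.sqrt (ρ 1))⁻¹ * q) with hC₁
  have hC₀0 : 0 ≤ C₀ := by rw [hC₀]; positivity
  have hC₁0 : 0 ≤ C₁ := by rw [hC₁]; positivity
  have hstep : ∀ j : ℕ, ‖D (j + 1) - D j‖ ≤ (C₀ + C₁ * ‖D j‖) * q ^ j := by
    intro j
    have h1 := hA (j + 1)
    have h2 := hUb j
    have h3 := hε (j + 1)
    have hid : D (j + 1) - D j =
        (e (X (j + 3)) - (e (V (j + 2)) - e (U (j + 2)))) + e (U (j + 2)) +
        ((e (V (j + 3)) - (e (X (j + 3)) + e (U (j + 2)))) +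
         (e (V (j + 3)) - (e (X (j + 3)) + e (U (j + 2))))) := by
      show (e (V (j + 3)) - e (U (j + 3))) - (e (V (j + 2)) - e (U (j + 2))) = _
      rw [show e (U (j + 3)) = e (U (j + 2)) + e (X (j + 3)) - e (V (j + 3)) from hUe (j + 1)]
      abel
    have hDj : ‖D j‖ = ‖e (V (j + 2)) - e (U (j + 2))‖ := rfl
    have htri : ‖D (j + 1) - D j‖ ≤
        ‖e (X (j + 3)) - (e (V (j + 2)) - e (U (j + 2)))‖ + ‖e (U (j + 2))‖ +
        (‖e (V (j + 3)) - (e (X (j + 3)) + e (U (j + 2)))‖ +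
         ‖e (V (j + 3)) - (e (X (j + 3)) + e (U (j + 2)))‖) := by
      rw [hid]
      calc ‖_ + _ + _‖ ≤ ‖_ + _‖ + ‖_‖ := norm_add_le _ _
        _ ≤ _ := by
          gcongr
          · exact norm_add_le _ _
          · exact norm_add_le _ _
    -- bound each term by a multiple of q ^ j
    have hq2j : q ^ (2 * j) ≤ q ^ j :=
      pow_le_pow_of_le_one hq0.le hq1.le (by omega)
    have hq2j2 : q ^ (2 * (j + 1)) ≤ q ^ j :=
      pow_le_pow_of_le_one hq0.le hq1.le (by omega)
    have hb1 : ‖e (X (j + 3)) - (e (V (j + 2)) - e (U (j + 2)))‖ ≤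
        (CY * ((Real.sqrt (ρ 1))⁻¹ * q) + C₁ * ‖D j‖) * q ^ j := by
      calc ‖e (X (j + 3)) - (e (V (j + 2)) - e (U (j + 2)))‖ ≤
            (CY + CM * ‖e (V (j + 2)) - e (U (j + 2))‖) *
              ((Real.sqrt (ρ 1))⁻¹ * q ^ (j + 1)) := h1
        _ = (CY * ((Real.sqrt (ρ 1))⁻¹ * q) + C₁ * ‖D j‖) * q ^ j := by
            rw [hC₁, hDj]; ring
    have hb2 : ‖e (U (j + 2))‖ ≤ α₂ * (ρ 1)⁻¹ * q ^ j := by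
      calc ‖e (U (j + 2))‖ ≤ α₂ * ((ρ 1)⁻¹ * q ^ (2 * j)) := h2
        _ ≤ α₂ * (ρ 1)⁻¹ * q ^ j := by
            rw [← mul_assoc]
            exact mul_le_mul_of_nonneg_left hq2j (by positivity)
    have hb3 : ‖e (V (j + 3)) - (e (X (j + 3)) + e (U (j + 2)))‖ ≤ α₂ * (ρ 1)⁻¹ * q ^ j := by
      calc ‖e (V (j + 3)) - (e (X (j + 3)) + e (U (j + 2)))‖ ≤
            α₂ * ((ρ 1)⁻¹ * q ^ (2 * (j + 1))) := h3
        _ ≤ α₂ * (ρ 1)⁻¹ * q ^ j := by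
            rw [← mul_assoc]
            exact mul_le_mul_of_nonneg_left hq2j2 (by positivity)
    have : (C₀ + C₁ * ‖D j‖) * q ^ j =
        (CY * ((Real.sqrt (ρ 1))⁻¹ * q) + C₁ * ‖D j‖) * q ^ j +
        (α₂ * (ρ 1)⁻¹ * q ^ j + (α₂ * (ρ 1)⁻¹ * q ^ j + α₂ * (ρ 1)⁻¹ * q ^ j)) := by
      rw [hC₀]; ring
    rw [this]
    linarith [htri, hb1, hb2, hb3]
  -- boundedness of D via a discrete Gronwall argument
  set c : ℝ := C₀ + C₁ with hc
  have hc0 : 0 ≤ c := by rw [hc]; positivity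
  have hBnd : ∀ j : ℕ, 1 + ‖D j‖ ≤
      (1 + ‖D 0‖) * Real.exp (c * ∑ i ∈ Finset.range j, q ^ i) := by
    intro j
    induction j with
    | zero => simp
    | succ j ih =>
      have hqj : (0:ℝ) ≤ q ^ j := pow_nonneg hq0.le j
      have h1 : 1 + ‖D (j + 1)‖ ≤ (1 + ‖D j‖) * (1 + c * q ^ j) := by
        have h2 := norm_sub_norm_le (D (j + 1)) (D j)
        have h3 := hstep j
        have h4 : C₀ + C₁ * ‖D j‖ ≤ c * (1 + ‖D j‖) := by
          rw [hc]; nlinarith [norm_nonneg (D j)]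
        nlinarith [norm_nonneg (D j),
          mul_le_mul_of_nonneg_right h4 hqj]
      have h5 : (1:ℝ) + c * q ^ j ≤ Real.exp (c * q ^ j) := by
        have := Real.add_one_le_exp (c * q ^ j); linarith
      calc 1 + ‖D (j + 1)‖ ≤ (1 + ‖D j‖) * (1 + c * q ^ j) := h1
        _ ≤ ((1 + ‖D 0‖) * Real.exp (c * ∑ i ∈ Finset.range j, q ^ i)) * (1 + c * q ^ j) := by
            apply mul_le_mul_of_nonneg_right ih
            nlinarith [mul_nonneg hc0 hqj]
        _ ≤ ((1 + ‖D 0‖) * Real.exp (c * ∑ i ∈ Finset.range j, q ^ i)) *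
              Real.exp (c * q ^ j) := by
            apply mul_le_mul_of_nonneg_left h5
            positivity
        _ = (1 + ‖D 0‖) * Real.exp (c * ∑ i ∈ Finset.range (j + 1), q ^ i) := by
            rw [mul_assoc, ← Real.exp_add, Finset.sum_range_succ, mul_add]
  have hsum : ∀ j : ℕ, ∑ i ∈ Finset.range j, q ^ i ≤ (1 - q)⁻¹ := by
    intro j
    have h := Summable.sum_le_tsum (Finset.range j) (fun i _ => pow_nonneg hq0.le i)
      (summable_geometric_of_lt_one hq0.le hq1)
    rwa [tsum_geometric_of_lt_one hq0.le hq1] at h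
  set B : ℝ := (1 + ‖D 0‖) * Real.exp (c * (1 - q)⁻¹) with hBdef
  have hB : ∀ j : ℕ, 1 + ‖D j‖ ≤ B := by
    intro j
    refine (hBnd j).trans ?_
    rw [hBdef]
    apply mul_le_mul_of_nonneg_left _ (by positivity)
    exact Real.exp_le_exp.mpr (mul_le_mul_of_nonneg_left (hsum j) hc0)
  have hB1 : (1:ℝ) ≤ B := le_trans (by nlinarith [norm_nonneg (D 0)]) (hB 0)
  -- D is Cauchy
  have hcauchy : CauchySeq D := by
    apply cauchySeq_of_le_geometric q (c * B) hq1
    intro n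
    rw [dist_eq_norm, norm_sub_rev]
    calc ‖D (n + 1) - D n‖ ≤ (C₀ + C₁ * ‖D n‖) * q ^ n := hstep n
      _ ≤ (c * B) * q ^ n := by
          apply mul_le_mul_of_nonneg_right _ (pow_nonneg hq0.le n)
          have := hB n
          rw [hc]
          nlinarith [norm_nonneg (D n)]
  obtain ⟨L, hL⟩ := cauchySeq_tendsto_of_complete hcauchy
  have hDL : Tendsto (fun j => ‖D j - L‖) atTop (nhds 0) := by
    have h1 : Tendsto (fun j => D j - L) atTop (nhds (L - L)) :=
      hL.sub tendsto_const_nhds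
    rw [sub_self] at h1
    simpa using h1.norm
  -- limit of X
  have hqpow : Tendsto (fun j : ℕ => q ^ j) atTop (nhds 0) :=
    tendsto_pow_atTop_nhds_zero_of_lt_one hq0.le hq1
  have hq2pow : Tendsto (fun j : ℕ => q ^ (2 * j)) atTop (nhds 0) := by
    have h1 : Tendsto (fun j : ℕ => (q ^ 2) ^ j) atTop (nhds 0) :=
      tendsto_pow_atTop_nhds_zero_of_lt_one (by positivity)
        (by nlinarith)
    simpa [← pow_mul] using h1
  have hXconv : Tendsto (fun j => ‖e (X (j + 3)) - L‖) atTop (nhds 0) := by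
    apply squeeze_zero (g := fun j =>
        (CY + CM * B) * ((Real.sqrt (ρ 1))⁻¹ * q ^ (j + 1)) + ‖D j - L‖)
      (fun j => norm_nonneg _)
    · intro j
      have h1 := hA (j + 1)
      have htri : ‖e (X (j + 3)) - L‖ ≤ ‖e (X (j + 3)) - D j‖ + ‖D j - L‖ := by
        have := dist_triangle (e (X (j + 3))) (D j) L
        simpa [dist_eq_norm] using this
      have hDj : D j = e (V (j + 2)) - e (U (j + 2)) := rfl
      have h2 : ‖e (X (j + 3)) - D j‖ ≤
          (CY + CM * B) * ((Real.sqrt (ρ 1))⁻¹ * q ^ (j + 1)) := by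
        rw [hDj]
        refine h1.trans (mul_le_mul_of_nonneg_right ?_ (by positivity))
        have := hB j
        rw [hDj] at this
        nlinarith [norm_nonneg (e (V (j + 2)) - e (U (j + 2)))]
      linarith
    · have h1 : Tendsto (fun j : ℕ => q ^ (j + 1)) atTop (nhds 0) := by
        have := hqpow.comp (tendsto_add_atTop_nat 1)
        simpa [Function.comp_def] using this
      have h2 : Tendsto (fun j : ℕ =>
          (CY + CM * B) * ((Real.sqrt (ρ 1))⁻¹ * q ^ (j + 1))) atTop (nhds 0) := by
        have := (h1.const_mul ((Real.sqrt (ρ 1))⁻¹)).const_mul (CY + CM * B)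
        simpa using this
      simpa using h2.add hDL
  -- limit of V
  have hVconv : Tendsto (fun j => ‖e (V (j + 3)) - L‖) atTop (nhds 0) := by
    apply squeeze_zero (g := fun j =>
        ‖e (X (j + 3)) - L‖ + α₂ * ((ρ 1)⁻¹ * q ^ (2 * (j + 1))) +
          α₂ * ((ρ 1)⁻¹ * q ^ (2 * j)))
      (fun j => norm_nonneg _)
    · intro j
      have h3 := hε (j + 1)
      have h2 := hUb j
      have hid : e (V (j + 3)) - L =
          (e (V (j + 3)) - (e (X (j + 3)) + e (U (j + 2)))) + (e (X (j + 3)) - L) +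
            e (U (j + 2)) := by abel
      calc ‖e (V (j + 3)) - L‖ ≤
            ‖(e (V (j + 3)) - (e (X (j + 3)) + e (U (j + 2)))) + (e (X (j + 3)) - L)‖ +
              ‖e (U (j + 2))‖ := by rw [hid]; exact norm_add_le _ _
        _ ≤ ‖e (V (j + 3)) - (e (X (j + 3)) + e (U (j + 2)))‖ + ‖e (X (j + 3)) - L‖ +
              ‖e (U (j + 2))‖ := by gcongr; exact norm_add_le _ _
        _ ≤ ‖e (X (j + 3)) - L‖ + α₂ * ((ρ 1)⁻¹ * q ^ (2 * (j + 1))) +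
              α₂ * ((ρ 1)⁻¹ * q ^ (2 * j)) := by linarith
    · have h1 : Tendsto (fun j : ℕ => q ^ (2 * (j + 1))) atTop (nhds 0) := by
        have := hq2pow.comp (tendsto_add_atTop_nat 1)
        simpa [Function.comp_def] using this
      have h2 := (h1.const_mul ((ρ 1)⁻¹)).const_mul α₂
      have h3 := (hq2pow.const_mul ((ρ 1)⁻¹)).const_mul α₂
      have := (hXconv.add h2).add h3
      simpa [mul_assoc] using this
  -- limit of U
  have hUconv : Tendsto (fun j => ‖e (U (j + 2))‖) atTop (nhds 0) := by
    apply squeeze_zero (g := fun j => α₂ * ((ρ 1)⁻¹ * q ^ (2 * j)))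
      (fun j => norm_nonneg _) (fun j => hUb j)
    have := (hq2pow.const_mul ((ρ 1)⁻¹)).const_mul α₂
    simpa [mul_assoc] using this
  -- conclusion
  refine ⟨(fun t i j => L (t, i, j)), (fun t i j => L (t, i, j)), 0, ?_, ?_, ?_⟩
  · have heL : e (fun t i j => L (t, i, j)) = L := rfl
    have hfn : (fun k => frob3 n1 n2 n3 (X k - fun t i j => L (t, i, j))) =
        fun k => ‖e (X k) - L‖ := by
      funext k
      rw [frob3_emb, ← he, he, emb_sub, ← he, heL]
    rw [hfn]
    exact (tendsto_add_atTop_iff_nat 3).mp hXconv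
  · have heL : e (fun t i j => L (t, i, j)) = L := rfl
    have hfn : (fun k => frob3 n1 n2 n3 (V k - fun t i j => L (t, i, j))) =
        fun k => ‖e (V k) - L‖ := by
      funext k
      rw [frob3_emb, ← he, he, emb_sub, ← he, heL]
    rw [hfn]
    exact (tendsto_add_atTop_iff_nat 3).mp hVconv
  · have hfn : (fun k => frob3 n1 n2 n3 (U k - 0)) = fun k => ‖e (U k)‖ := by
      funext k
      rw [sub_zero, frob3_emb, ← he]
    rw [hfn]
    exact (tendsto_add_atTop_iff_nat 2).mp hUconv
end

section
/- Let G_l ∈ ℝ^{N_l×⋯×N_l×F} be a grid tensor with D grid dimensions, N_l ≥ 2, and suppose ‖G_l[z,:]‖_{ℓ1} ≤ 1 for every grid vertex index z. Then the multilinear interpolation map h_l : [0,1)^D → ℝ^F is Lipschitz continuous: for all v₁, v₂ ∈ [0,1)^D, ‖h_l(v₁) − h_l(v₂)‖_{ℓ1} ≤ 2^D (N_l − 1) ‖v₁ − v₂‖_{ℓ1}. -/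
open Finset

noncomputable def phi (β : Bool) (x : ℝ) : ℝ := if β then x else 1 - x

noncomputable def Efun (D F : ℕ) (G : (Fin D → ℕ) → Fin F → ℝ)
    (c : Fin D → ℕ) (u : Fin D → ℝ) : Fin F → ℝ := fun j =>
  ∑ b : Fin D → Bool,
    (∏ d, phi (b d) (u d)) * G (fun d => c d + (if b d then 1 else 0)) j

lemma interp_eq (D F Nl : ℕ) (G : (Fin D → ℕ) → Fin F → ℝ) (v : Fin D → ℝ) :
    interp D F Nl G v = Efun D F G (fun d => (⌊((Nl:ℝ)-1) * v d⌋).toNat)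
      (fun d => Int.fract (((Nl:ℝ)-1) * v d)) := rfl

lemma core (D F : ℕ) (G : (Fin D → ℕ) → Fin F → ℝ)
    (hG : ∀ z, (∑ j, |G z j|) ≤ 1)
    (c : Fin D → ℕ) (u u' : Fin D → ℝ)
    (hu0 : ∀ d', 0 ≤ u d') (hu1 : ∀ d', u d' ≤ 1)
    (d : Fin D) (heq : ∀ d', d' ≠ d → u d' = u' d') :
    (∑ j, |Efun D F G c u j - Efun D F G c u' j|) ≤ 2 ^ D * |u d - u' d| := by
  classical
  set δ := |u d - u' d| with hδ
  have hδ0 : 0 ≤ δ := abs_nonneg _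
  have hWb : ∀ b : Fin D → Bool,
      |(∏ d', phi (b d') (u d')) - (∏ d', phi (b d') (u' d'))| ≤ δ := by
    intro b
    have h1 : (∏ d', phi (b d') (u d'))
        = phi (b d) (u d) * ∏ d' ∈ univ.erase d, phi (b d') (u d') :=
      (Finset.mul_prod_erase univ _ (mem_univ d)).symm
    have h2 : (∏ d', phi (b d') (u' d'))
        = phi (b d) (u' d) * ∏ d' ∈ univ.erase d, phi (b d') (u d') := by
      rw [← Finset.mul_prod_erase univ _ (mem_univ d)]
      congr 1
      exact Finset.prod_congr rfl fun x hx => by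
        rw [heq x (Finset.ne_of_mem_erase hx)]
    rw [h1, h2, ← sub_mul, abs_mul]
    have hphi : |phi (b d) (u d) - phi (b d) (u' d)| = δ := by
      cases hbd : b d
      · simp only [phi, if_neg Bool.false_ne_true]
        rw [show (1 - u d) - (1 - u' d) = -(u d - u' d) by ring, abs_neg]
      · simp [phi, hδ]
    have hp0 : 0 ≤ ∏ d' ∈ univ.erase d, phi (b d') (u d') :=
      Finset.prod_nonneg fun x _ => by
        cases b x <;> simp [phi] <;> [linarith [hu1 x]; exact hu0 x]
    have hp1 : (∏ d' ∈ univ.erase d, phi (b d') (u d')) ≤ 1 :=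
      Finset.prod_le_one (fun x _ => by
        cases b x <;> simp [phi] <;> [linarith [hu1 x]; exact hu0 x])
        (fun x _ => by
        cases b x <;> simp [phi] <;> [exact hu0 x; exact hu1 x])
    rw [hphi]
    calc δ * |∏ d' ∈ univ.erase d, phi (b d') (u d')| = δ * (∏ d' ∈ univ.erase d, phi (b d') (u d')) := by
          rw [abs_of_nonneg hp0]
      _ ≤ δ * 1 := by nlinarith
      _ = δ := mul_one δ
  calc (∑ j, |Efun D F G c u j - Efun D F G c u' j|)
      ≤ ∑ j, ∑ b : Fin D → Bool,
          |(∏ d', phi (b d') (u d')) - (∏ d', phi (b d') (u' d'))| *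
            |G (fun d' => c d' + (if b d' then 1 else 0)) j| := by
        refine Finset.sum_le_sum fun j _ => ?_
        simp only [Efun]
        rw [← Finset.sum_sub_distrib]
        refine (Finset.abs_sum_le_sum_abs _ _).trans (le_of_eq ?_)
        refine Finset.sum_congr rfl fun b _ => ?_
        rw [← sub_mul, abs_mul]
    _ = ∑ b : Fin D → Bool,
          |(∏ d', phi (b d') (u d')) - (∏ d', phi (b d') (u' d'))| *
            (∑ j, |G (fun d' => c d' + (if b d' then 1 else 0)) j|) := by
        rw [Finset.sum_comm]
        exact Finset.sum_congr rfl fun b _ => (Finset.mul_sum _ _ _).symm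
    _ ≤ ∑ b : Fin D → Bool, δ * 1 := by
        refine Finset.sum_le_sum fun b _ => ?_
        exact mul_le_mul (hWb b) (hG _) (Finset.sum_nonneg fun j _ => abs_nonneg _) hδ0
    _ = 2 ^ D * δ := by
        rw [Finset.sum_const, mul_one]
        simp [Fintype.card_fun]

lemma shift (D F : ℕ) (G : (Fin D → ℕ) → Fin F → ℝ)
    (c : Fin D → ℕ) (u : Fin D → ℝ) (d : Fin D) (hud : u d = 1) :
    Efun D F G c u = Efun D F G (Function.update c d (c d + 1)) (Function.update u d 0) := by
  classical
  funext j
  simp only [Efun]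
  have hinv : Function.Involutive (fun b : Fin D → Bool => Function.update b d (!b d)) := by
    intro b
    funext x
    by_cases hx : x = d
    · subst hx; simp
    · simp [Function.update_of_ne hx]
  refine Fintype.sum_bijective _ hinv.bijective _ _ fun b => ?_
  by_cases hbd : b d
  · have hW : (∏ d', phi (b d') (u d'))
        = ∏ d', phi ((Function.update b d (!b d)) d') ((Function.update u d 0) d') := by
      refine Finset.prod_congr rfl fun x _ => ?_
      by_cases hx : x = d
      · subst hx; simp [hbd, phi, hud]
      · simp [Function.update_of_ne hx]
    have hz : (fun d' => c d' + (if b d' then 1 else 0)) =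
        fun d' => (Function.update c d (c d + 1)) d' +
          (if (Function.update b d (!b d)) d' then 1 else 0) := by
      funext x
      by_cases hx : x = d
      · subst hx; simp [hbd]
      · simp [Function.update_of_ne hx]
    simp only [← hW, ← hz]
  · have hbd' : b d = false := Bool.eq_false_iff.mpr hbd
    have h1 : (∏ d', phi (b d') (u d')) = 0 :=
      Finset.prod_eq_zero (mem_univ d) (by simp [phi, hbd', hud])
    have h2 : (∏ d', phi ((Function.update b d (!b d)) d') ((Function.update u d 0) d')) = 0 :=
      Finset.prod_eq_zero (mem_univ d) (by simp [phi, hbd'])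
    rw [h1, h2, zero_mul, zero_mul]

lemma oneD (D F Nl : ℕ) (hNl : 2 ≤ Nl) (G : (Fin D → ℕ) → Fin F → ℝ)
    (hG : ∀ z, (∑ j, |G z j|) ≤ 1) (d : Fin D) :
    ∀ n : ℕ, ∀ v v' : Fin D → ℝ,
    (∀ d', 0 ≤ v d') → (∀ d', v d' < 1) → (∀ d', 0 ≤ v' d') → (∀ d', v' d' < 1) →
    (∀ d', d' ≠ d → v d' = v' d') → v d ≤ v' d →
    (⌊((Nl:ℝ)-1) * v' d⌋).toNat ≤ (⌊((Nl:ℝ)-1) * v d⌋).toNat + n →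
    (∑ j, |interp D F Nl G v j - interp D F Nl G v' j|) ≤
      2 ^ D * (((Nl:ℝ)-1) * v' d - ((Nl:ℝ)-1) * v d) := by
  have hN1 : (1:ℝ) ≤ (Nl:ℝ) - 1 := by
    have : (2:ℝ) ≤ (Nl:ℝ) := by exact_mod_cast hNl
    linarith
  have hN1pos : (0:ℝ) < (Nl:ℝ) - 1 := by linarith
  intro n
  induction n with
  | zero =>
    intro v v' hv0 hv1 hv'0 hv'1 heq hle hfl
    set t := ((Nl:ℝ)-1) * v d with htdef
    set s := ((Nl:ℝ)-1) * v' d with hsdef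
    have ht0 : 0 ≤ t := mul_nonneg (le_of_lt hN1pos) (hv0 d)
    have hts : t ≤ s := by
      apply mul_le_mul_of_nonneg_left hle (le_of_lt hN1pos)
    have hfl0 : (0:ℤ) ≤ ⌊t⌋ := Int.floor_nonneg.mpr ht0
    have hflle : ⌊t⌋ ≤ ⌊s⌋ := Int.floor_le_floor hts
    have hfleq : ⌊t⌋ = ⌊s⌋ := by omega
    rw [interp_eq, interp_eq]
    have hceq : (fun d' => (⌊((Nl:ℝ)-1) * v' d'⌋).toNat)
        = (fun d' => (⌊((Nl:ℝ)-1) * v d'⌋).toNat) := by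
      funext x
      by_cases hx : x = d
      · subst hx; rw [← htdef, ← hsdef, hfleq]
      · rw [heq x hx]
    rw [hceq]
    have := core D F G hG (fun d' => (⌊((Nl:ℝ)-1) * v d'⌋).toNat)
      (fun d' => Int.fract (((Nl:ℝ)-1) * v d'))
      (fun d' => Int.fract (((Nl:ℝ)-1) * v' d'))
      (fun d' => Int.fract_nonneg _) (fun d' => le_of_lt (Int.fract_lt_one _))
      d (fun d' hd' => by
        show Int.fract (((Nl:ℝ)-1) * v d') = Int.fract (((Nl:ℝ)-1) * v' d')
        rw [heq d' hd'])
    refine this.trans (le_of_eq ?_)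
    congr 1
    show |Int.fract t - Int.fract s| = s - t
    have hfr : Int.fract t - Int.fract s = t - s := by
      unfold Int.fract; rw [hfleq]; ring
    rw [hfr, abs_of_nonpos (by linarith)]
    ring
  | succ n ih =>
    intro v v' hv0 hv1 hv'0 hv'1 heq hle hfl
    set t := ((Nl:ℝ)-1) * v d with htdef
    set s := ((Nl:ℝ)-1) * v' d with hsdef
    have ht0 : 0 ≤ t := mul_nonneg (le_of_lt hN1pos) (hv0 d)
    have hs0 : 0 ≤ s := mul_nonneg (le_of_lt hN1pos) (hv'0 d)
    have hts : t ≤ s := mul_le_mul_of_nonneg_left hle (le_of_lt hN1pos)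
    by_cases hcase : (⌊s⌋).toNat ≤ (⌊t⌋).toNat + n
    · exact ih v v' hv0 hv1 hv'0 hv'1 heq hle hcase
    · set m : ℕ := (⌊t⌋).toNat + 1 with hmdef
      have hfl0 : (0:ℤ) ≤ ⌊t⌋ := Int.floor_nonneg.mpr ht0
      have hfls0 : (0:ℤ) ≤ ⌊s⌋ := Int.floor_nonneg.mpr hs0
      have hm_le : m ≤ (⌊s⌋).toNat := by omega
      have hmreal_le_s : (m:ℝ) ≤ s := by
        have h1 : ((⌊s⌋).toNat : ℝ) ≤ s := by
          have h2 : (((⌊s⌋).toNat : ℤ) : ℝ) ≤ s := by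
            rw [Int.toNat_of_nonneg hfls0]; exact Int.floor_le s
          exact_mod_cast h2
        calc (m:ℝ) ≤ ((⌊s⌋).toNat : ℝ) := by exact_mod_cast hm_le
          _ ≤ s := h1
      have hs_lt : s < (Nl:ℝ) - 1 := by
        have := hv'1 d
        calc s < ((Nl:ℝ)-1) * 1 := by
              rw [hsdef]; exact mul_lt_mul_of_pos_left this hN1pos
          _ = (Nl:ℝ) - 1 := mul_one _
      set x0 : ℝ := (m:ℝ) / ((Nl:ℝ)-1) with hx0def
      have hx0_0 : 0 ≤ x0 := div_nonneg (by positivity) (le_of_lt hN1pos)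
      have hx0_1 : x0 < 1 := by
        rw [hx0def, div_lt_one hN1pos]
        exact lt_of_le_of_lt hmreal_le_s hs_lt
      have hNx0 : ((Nl:ℝ)-1) * x0 = (m:ℝ) := by
        rw [hx0def]; field_simp [hN1pos.ne']
      set v'' : Fin D → ℝ := Function.update v d x0 with hv''def
      have hv''0 : ∀ d', 0 ≤ v'' d' := by
        intro d'; by_cases hx : d' = d
        · subst hx; simpa [hv''def] using hx0_0
        · simpa [hv''def, Function.update_of_ne hx] using hv0 d'
      have hv''1 : ∀ d', v'' d' < 1 := by
        intro d'; by_cases hx : d' = d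
        · subst hx; simpa [hv''def] using hx0_1
        · simpa [hv''def, Function.update_of_ne hx] using hv1 d'
      have hv''d : v'' d = x0 := by simp [hv''def]
      -- floor facts for m
      have hfloorm : ⌊((Nl:ℝ)-1) * v'' d⌋ = (m:ℤ) := by
        rw [hv''d, hNx0]; exact_mod_cast Int.floor_natCast m
      have hfractm : Int.fract (((Nl:ℝ)-1) * v'' d) = 0 := by
        rw [hv''d, hNx0]; exact_mod_cast Int.fract_natCast m
      -- cast of m
      have hmcast : (m:ℝ) = (⌊t⌋ : ℝ) + 1 := by
        have h3 : ((m:ℤ):ℝ) = ((⌊t⌋:ℤ):ℝ) + 1 := by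
          have h4 : (m:ℤ) = ⌊t⌋ + 1 := by omega
          rw [h4]; push_cast; ring
        exact_mod_cast h3
      -- Step A : interp v'' = Efun c (update u d 1)
      set c : Fin D → ℕ := fun d' => (⌊((Nl:ℝ)-1) * v d'⌋).toNat with hcdef
      set u : Fin D → ℝ := fun d' => Int.fract (((Nl:ℝ)-1) * v d') with hudef
      have hinterp_v'' : interp D F Nl G v'' = Efun D F G c (Function.update u d 1) := by
        rw [interp_eq]
        have h1 : (fun d' => (⌊((Nl:ℝ)-1) * v'' d'⌋).toNat) = Function.update c d (c d + 1) := by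
          funext x
          by_cases hx : x = d
          · subst hx
            rw [hfloorm, Int.toNat_natCast, Function.update_self]
          · rw [Function.update_of_ne hx]
            simp only [hcdef, hv''def, Function.update_of_ne hx]
        have h2 : (fun d' => Int.fract (((Nl:ℝ)-1) * v'' d')) =
            Function.update (Function.update u d 1) d 0 := by
          funext x
          by_cases hx : x = d
          · subst hx; rw [hfractm]; simp
          · rw [Function.update_of_ne hx, Function.update_of_ne hx]
            simp only [hudef, hv''def, Function.update_of_ne hx]
        rw [h1, h2, ← shift D F G c (Function.update u d 1) d (by simp)]
      have hstepA : (∑ j, |interp D F Nl G v j - interp D F Nl G v'' j|) ≤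
          2 ^ D * ((m:ℝ) - t) := by
        rw [interp_eq, hinterp_v'']
        have := core D F G hG c u (Function.update u d 1)
          (fun d' => Int.fract_nonneg _) (fun d' => le_of_lt (Int.fract_lt_one _))
          d (fun d' hd' => (Function.update_of_ne hd' _ _).symm)
        refine this.trans (le_of_eq ?_)
        congr 1
        show |u d - Function.update u d 1 d| = (m:ℝ) - t
        rw [Function.update_self]
        have hud : u d = t - (⌊t⌋:ℝ) := rfl
        rw [hud, hmcast]
        have hfr : t - (⌊t⌋:ℝ) < 1 := by
          have := Int.lt_floor_add_one t; linarith
        rw [abs_of_nonpos (by linarith)]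
        ring
      -- Step B : induction hypothesis on v'' v'
      have hv''le : v'' d ≤ v' d := by
        rw [hv''d, hx0def, div_le_iff₀ hN1pos]
        calc (m:ℝ) ≤ s := hmreal_le_s
          _ = v' d * ((Nl:ℝ)-1) := by rw [hsdef]; ring
      have hflB : (⌊s⌋).toNat ≤ (⌊((Nl:ℝ)-1) * v'' d⌋).toNat + n := by
        rw [hfloorm, Int.toNat_natCast]
        omega
      have hstepB := ih v'' v' hv''0 hv''1 hv'0 hv'1
        (fun d' hd' => by
          rw [hv''def, Function.update_of_ne hd']; exact heq d' hd')
        hv''le hflB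
      -- combine
      have htri : (∑ j, |interp D F Nl G v j - interp D F Nl G v' j|) ≤
          (∑ j, |interp D F Nl G v j - interp D F Nl G v'' j|) +
          (∑ j, |interp D F Nl G v'' j - interp D F Nl G v' j|) := by
        rw [← Finset.sum_add_distrib]
        exact Finset.sum_le_sum fun j _ => abs_sub_le _ _ _
      have hv''s : ((Nl:ℝ)-1) * v'' d = (m:ℝ) := by rw [hv''d, hNx0]
      calc (∑ j, |interp D F Nl G v j - interp D F Nl G v' j|)
          ≤ (∑ j, |interp D F Nl G v j - interp D F Nl G v'' j|) +
            (∑ j, |interp D F Nl G v'' j - interp D F Nl G v' j|) := htri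
        _ ≤ 2 ^ D * ((m:ℝ) - t) + 2 ^ D * (s - ((Nl:ℝ)-1) * v'' d) := by
            apply add_le_add hstepA
            exact hstepB
        _ = 2 ^ D * (s - t) := by rw [hv''s]; ring

lemma oneD' (D F Nl : ℕ) (hNl : 2 ≤ Nl) (G : (Fin D → ℕ) → Fin F → ℝ)
    (hG : ∀ z, (∑ j, |G z j|) ≤ 1) (d : Fin D)
    (v v' : Fin D → ℝ)
    (hv0 : ∀ d', 0 ≤ v d') (hv1 : ∀ d', v d' < 1)
    (hv'0 : ∀ d', 0 ≤ v' d') (hv'1 : ∀ d', v' d' < 1)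
    (heq : ∀ d', d' ≠ d → v d' = v' d') :
    (∑ j, |interp D F Nl G v j - interp D F Nl G v' j|) ≤
      2 ^ D * (((Nl:ℝ)-1) * |v d - v' d|) := by
  rcases le_total (v d) (v' d) with h | h
  · have H := oneD D F Nl hNl G hG d ((⌊((Nl:ℝ)-1) * v' d⌋).toNat) v v'
      hv0 hv1 hv'0 hv'1 heq h (Nat.le_add_left _ _)
    refine H.trans (le_of_eq ?_)
    rw [abs_of_nonpos (sub_nonpos.mpr h)]
    ring
  · have H := oneD D F Nl hNl G hG d ((⌊((Nl:ℝ)-1) * v d⌋).toNat) v' v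
      hv'0 hv'1 hv0 hv1 (fun d' hd' => (heq d' hd').symm) h (Nat.le_add_left _ _)
    have hsymm : (∑ j, |interp D F Nl G v j - interp D F Nl G v' j|)
        = ∑ j, |interp D F Nl G v' j - interp D F Nl G v j| :=
      Finset.sum_congr rfl fun j _ => abs_sub_comm _ _
    rw [hsymm]
    refine H.trans (le_of_eq ?_)
    rw [abs_of_nonneg (sub_nonneg.mpr h)]
    ring

lemma tele (F : ℕ) (A : ℕ → Fin F → ℝ) :
    ∀ n : ℕ, (∑ j, |A 0 j - A n j|) ≤ ∑ i ∈ Finset.range n, ∑ j, |A i j - A (i+1) j| := by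
  intro n
  induction n with
  | zero => simp
  | succ n ih =>
    rw [Finset.sum_range_succ]
    calc (∑ j, |A 0 j - A (n+1) j|)
        ≤ ∑ j, (|A 0 j - A n j| + |A n j - A (n+1) j|) :=
          Finset.sum_le_sum fun j _ => abs_sub_le _ _ _
      _ = (∑ j, |A 0 j - A n j|) + ∑ j, |A n j - A (n+1) j| := Finset.sum_add_distrib
      _ ≤ _ := add_le_add_left ih _

/-- **Lipschitz continuity of multilinear grid interpolation.** If `N_l ≥ 2` and every
grid vertex feature has ℓ1 norm at most 1, then for all `v₁, v₂ ∈ [0,1)^D`,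
`‖h_l(v₁) − h_l(v₂)‖₁ ≤ 2^D (N_l − 1) ‖v₁ − v₂‖₁`. -/
theorem interp_lipschitz
    (D F Nl : ℕ) (hNl : 2 ≤ Nl)
    (G : (Fin D → ℕ) → Fin F → ℝ)
    (hG : ∀ z : Fin D → ℕ, (∑ j, |G z j|) ≤ 1)
    (v1 v2 : Fin D → ℝ)
    (hv1 : ∀ d, v1 d ∈ Set.Ico (0 : ℝ) 1) (hv2 : ∀ d, v2 d ∈ Set.Ico (0 : ℝ) 1) :
    (∑ j, |interp D F Nl G v1 j - interp D F Nl G v2 j|) ≤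
      2 ^ D * ((Nl : ℝ) - 1) * ∑ d, |v1 d - v2 d| := by
  classical
  set w : ℕ → Fin D → ℝ := fun i d => if (d:ℕ) < i then v2 d else v1 d with hwdef
  have hw0 : w 0 = v1 := funext fun d => if_neg (Nat.not_lt_zero _)
  have hwD : w D = v2 := funext fun d => if_pos d.isLt
  have hwmem0 : ∀ i d', 0 ≤ w i d' := by
    intro i d'
    simp only [hwdef]
    split
    · exact (hv2 d').1
    · exact (hv1 d').1
  have hwmem1 : ∀ i d', w i d' < 1 := by
    intro i d'
    simp only [hwdef]
    split
    · exact (hv2 d').2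
    · exact (hv1 d').2
  have key : ∀ d : Fin D,
      (∑ j, |interp D F Nl G (w d.val) j - interp D F Nl G (w (d.val+1)) j|) ≤
        2 ^ D * (((Nl:ℝ)-1) * |v1 d - v2 d|) := by
    intro d
    have heq : ∀ d', d' ≠ d → w d.val d' = w (d.val+1) d' := by
      intro d' hd'
      have hne : (d':ℕ) ≠ (d:ℕ) := fun h => hd' (Fin.val_injective h)
      have hiff : ((d':ℕ) < d.val) ↔ ((d':ℕ) < d.val + 1) := by omega
      simp only [hwdef]
      rw [if_congr hiff rfl rfl]
    have habs : |w d.val d - w (d.val+1) d| = |v1 d - v2 d| := by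
      simp only [hwdef]
      rw [if_neg (lt_irrefl _), if_pos (Nat.lt_succ_self _), abs_sub_comm]
    have H := oneD' D F Nl hNl G hG d (w d.val) (w (d.val+1))
      (hwmem0 _) (hwmem1 _) (hwmem0 _) (hwmem1 _) heq
    rw [habs] at H
    exact H
  calc (∑ j, |interp D F Nl G v1 j - interp D F Nl G v2 j|)
      = ∑ j, |interp D F Nl G (w 0) j - interp D F Nl G (w D) j| := by rw [hw0, hwD]
    _ ≤ ∑ i ∈ Finset.range D, ∑ j, |interp D F Nl G (w i) j - interp D F Nl G (w (i+1)) j| :=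
        tele F (fun i => interp D F Nl G (w i)) D
    _ = ∑ d : Fin D, ∑ j, |interp D F Nl G (w d.val) j - interp D F Nl G (w (d.val+1)) j| :=
        (Fin.sum_univ_eq_sum_range _ D).symm
    _ ≤ ∑ d : Fin D, 2 ^ D * (((Nl:ℝ)-1) * |v1 d - v2 d|) := Finset.sum_le_sum fun d _ => key d
    _ = 2 ^ D * ((Nl : ℝ) - 1) * ∑ d, |v1 d - v2 d| := by
        rw [← Finset.mul_sum, ← Finset.mul_sum, ← mul_assoc]
end
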